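/- arXiv:1710.03475 — 8 statements merged into one kernel-verified Lean document; each statement's English description precedes it below -/
import Mathlib

section
/- Let 𝒯 = ({J_1,…,J_ℓ}, T) be a tree decomposition of a graph G on n vertices and let F be its completion graph. For every real symmetric n×n matrix Z ∈ S_F, there exists an n×n real symmetric positive semidefinite matrix X with P_F(X) = Z if and only if the principal submatrix Z[J_j,J_j] is positive semidefinite for every j ∈ {1,…,ℓ}. -/
open Matrix

/-- `(J, T)` is a tree decomposition of the graph `G`:  `T` is a tree, every vertex of `G`
is covered by some bag, every edge of `G` is covered by some bag, and the bags containing any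
fixed vertex satisfy the running-intersection property along paths of `T`. -/
def IsTreeDecomp {n ℓ : ℕ} (G : SimpleGraph (Fin n)) (T : SimpleGraph (Fin ℓ))
    (J : Fin ℓ → Finset (Fin n)) : Prop :=
  T.IsTree ∧
  (∀ v : Fin n, ∃ k, v ∈ J k) ∧
  (∀ u v : Fin n, G.Adj u v → ∃ k, u ∈ J k ∧ v ∈ J k) ∧
  (∀ (i j : Fin ℓ) (w : T.Walk i j), w.IsPath →
    ∀ v : Fin n, v ∈ J i → v ∈ J j → ∀ k ∈ w.support, v ∈ J k)

/-- The principal submatrix of `X` with rows and columns in `s`. -/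
def psub {n : ℕ} (X : Matrix (Fin n) (Fin n) ℝ) (s : Finset (Fin n)) :
    Matrix s s ℝ :=
  X.submatrix Subtype.val Subtype.val

/-- The projection `P_F` onto the completion graph `F` of the tree decomposition: it keeps the
diagonal and the entries `(u,v)` covered by some bag, and zeroes out all other entries. -/
def projF {n ℓ : ℕ} (J : Fin ℓ → Finset (Fin n)) (X : Matrix (Fin n) (Fin n) ℝ) :
    Matrix (Fin n) (Fin n) ℝ :=
  Matrix.of fun u v => if u = v ∨ ∃ k, u ∈ J k ∧ v ∈ J k then X u v else 0

/-! A positive semidefinite matrix is a Gram matrix, and two families of vectors with the same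
Gram matrix differ by a linear isometry. Let `v` be a leaf of the tree with neighbour `u`. By the
running-intersection property `J v` meets the other bags only inside `J u`, so vectors realising
`Z` on the other bags (by induction on the tree) and vectors realising `Z` on `J v` have the same
Gram matrix on the overlap; moving the latter by an isometry glues the two families. The Gram
matrix of the resulting family is the completion. -/

open scoped InnerProductSpace ComplexOrder

section Gram

variable {𝕜 E : Type*} [RCLike 𝕜] [NormedAddCommGroup E] [InnerProductSpace 𝕜 E]

theorem Matrix.PosSemidef.exists_gram_eq {s : Type*} [Fintype s] {M : Matrix s s 𝕜}
    (hM : M.PosSemidef) {b : s → E} (hb : Orthonormal 𝕜 b) :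
    ∃ v : s → E, gram 𝕜 v = M := by
  obtain ⟨B, rfl⟩ : ∃ B : Matrix s s 𝕜, M = Bᴴ * B := by
    classical
    open scoped MatrixOrder Matrix.Norms.L2Operator in
    exact CStarAlgebra.nonneg_iff_eq_star_mul_self.mp hM.nonneg
  refine ⟨fun j => ∑ i, B i j • b i, ?_⟩
  ext j k
  simp [hb.inner_sum, mul_apply]

theorem Matrix.PosSemidef.exists_inner_eq_of_submatrix {ι : Type*} [Fintype ι]
    {Z : Matrix ι ι 𝕜} {A : Finset ι} (hZ : (Z.submatrix ((↑) : A → ι) (↑)).PosSemidef) :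
    ∃ x : ι → EuclideanSpace 𝕜 ι, ∀ a ∈ A, ∀ b ∈ A, ⟪x a, x b⟫_𝕜 = Z a b := by
  classical
  obtain ⟨v, hv⟩ := hZ.exists_gram_eq
    ((EuclideanSpace.orthonormal_single (𝕜 := 𝕜)).comp ((↑) : A → ι) Subtype.val_injective)
  refine ⟨fun a => if h : a ∈ A then v ⟨a, h⟩ else 0, fun a ha b hb => ?_⟩
  simpa [ha, hb] using congrFun₂ hv ⟨a, ha⟩ ⟨b, hb⟩

theorem exists_linearIsometry_apply_eq_of_inner_eq [FiniteDimensional 𝕜 E] {ι : Type*}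
    (v w : ι → E) (h : ∀ i j, ⟪v i, v j⟫_𝕜 = ⟪w i, w j⟫_𝕜) :
    ∃ Q : E →ₗᵢ[𝕜] E, ∀ i, Q (v i) = w i := by
  -- `Tw` factors isometrically through the range of `Tv`; that isometry extends to all of `E`.
  set Tv := Finsupp.linearCombination 𝕜 v
  set Tw := Finsupp.linearCombination 𝕜 w
  have hT : ∀ c d, ⟪Tv c, Tv d⟫_𝕜 = ⟪Tw c, Tw d⟫_𝕜 := by
    intro c d
    simp [Tv, Tw, Finsupp.linearCombination_apply, Finsupp.sum, sum_inner, inner_sum,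
      inner_smul_left, inner_smul_right, h]
  have hker : LinearMap.ker Tv ≤ LinearMap.ker Tw := fun c hc => by
    rw [LinearMap.mem_ker] at hc ⊢
    rw [← inner_self_eq_zero (𝕜 := 𝕜), ← hT, hc, inner_zero_left]
  let f : LinearMap.range Tv →ₗ[𝕜] E :=
    (LinearMap.ker Tv).liftQ Tw hker ∘ₗ Tv.quotKerEquivRange.symm.toLinearMap
  have hf : ∀ c, f ⟨Tv c, LinearMap.mem_range_self Tv c⟩ = Tw c := fun c => by simp [f]
  let L : LinearMap.range Tv →ₗᵢ[𝕜] E := f.isometryOfInner <| by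
    rintro ⟨_, c, rfl⟩ ⟨_, d, rfl⟩
    rw [hf, hf, Submodule.coe_inner, hT]
  refine ⟨L.extend, fun i => ?_⟩
  calc L.extend (v i) = L.extend (Tv (Finsupp.single i 1)) := by simp [Tv]
    _ = Tw (Finsupp.single i 1) :=
      (L.extend_apply ⟨_, LinearMap.mem_range_self Tv _⟩).trans (hf _)
    _ = w i := by simp [Tw]

theorem exists_eqOn_and_inner_eq [FiniteDimensional 𝕜 E] {ι : Type*} (x y : ι → E)
    (S A : Set ι) (h : ∀ a ∈ S ∩ A, ∀ b ∈ S ∩ A, ⟪x a, x b⟫_𝕜 = ⟪y a, y b⟫_𝕜) :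
    ∃ z : ι → E, S.EqOn z x ∧ ∀ a ∈ A, ∀ b ∈ A, ⟪z a, z b⟫_𝕜 = ⟪y a, y b⟫_𝕜 := by
  classical
  obtain ⟨Q, hQ⟩ := exists_linearIsometry_apply_eq_of_inner_eq (fun a : ↥(S ∩ A) => y a)
    (fun a => x a) fun a b => (h a a.2 b b.2).symm
  have hz : ∀ a ∈ A, S.piecewise x (Q ∘ y) a = Q (y a) := fun a ha => by
    by_cases haS : a ∈ S
    · simp [haS, hQ ⟨a, haS, ha⟩]
    · simp [haS]
  refine ⟨S.piecewise x (Q ∘ y), S.piecewise_eqOn _ _, fun a ha b hb => ?_⟩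
  rw [hz a ha, hz b hb, Q.inner_map_map]

end Gram

section RunningIntersection

open SimpleGraph

variable {κ ι : Type*}

def IsRunningIntersection (T : SimpleGraph κ) (J : κ → Finset ι) : Prop :=
  ∀ (i j : κ) (w : T.Walk i j), w.IsPath → ∀ v : ι, v ∈ J i → v ∈ J j → ∀ k ∈ w.support, v ∈ J k

variable {T : SimpleGraph κ} {J : κ → Finset ι}

theorem IsRunningIntersection.induce (hJ : IsRunningIntersection T J) (s : Set κ) :
    IsRunningIntersection (T.induce s) fun k => J k := by
  intro i j w hw a hai haj k hk
  refine hJ _ _ (w.map (Embedding.induce s).toHom) (hw.map Subtype.val_injective) a hai haj k ?_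
  rw [Walk.support_map]
  exact List.mem_map_of_mem hk

theorem IsRunningIntersection.mem_of_forall_adj_eq (hJ : IsRunningIntersection T J)
    (hT : T.Connected) {u v k : κ} (hu : ∀ w, T.Adj v w → w = u) (hk : k ≠ v) {a : ι}
    (hav : a ∈ J v) (hak : a ∈ J k) : a ∈ J u := by
  obtain ⟨p, hp⟩ := hT.exists_isPath v k
  refine hJ v k p hp a hav hak u ?_
  rw [← hu _ (p.adj_snd (Walk.not_nil_of_ne hk.symm))]
  exact List.mem_of_mem_tail (Walk.snd_mem_tail_support (Walk.not_nil_of_ne hk.symm))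

variable {𝕜 E : Type*} [RCLike 𝕜] [NormedAddCommGroup E] [InnerProductSpace 𝕜 E]
  [FiniteDimensional 𝕜 E]

theorem SimpleGraph.IsTree.exists_inner_eq_on_bags [Finite κ] (hT : T.IsTree)
    (hJ : IsRunningIntersection T J) (Z : Matrix ι ι 𝕜)
    (hbag : ∀ k, ∃ y : ι → E, ∀ a ∈ J k, ∀ b ∈ J k, ⟪y a, y b⟫_𝕜 = Z a b) :
    ∃ x : ι → E, ∀ k, ∀ a ∈ J k, ∀ b ∈ J k, ⟪x a, x b⟫_𝕜 = Z a b := by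
  induction hc : Nat.card κ using Nat.strong_induction_on generalizing κ with
  | _ m ih =>
  rcases subsingleton_or_nontrivial κ with hκ | hκ
  · obtain ⟨r⟩ := hT.connected.nonempty
    obtain ⟨y, hy⟩ := hbag r
    exact ⟨y, fun k => Subsingleton.elim r k ▸ hy⟩
  classical
  have := Fintype.ofFinite κ
  obtain ⟨v, hv⟩ := hT.exists_vert_degree_one_of_nontrivial
  obtain ⟨u, hvu, hu⟩ := degree_eq_one_iff_existsUnique_adj.mp hv
  let s : Set κ := {v}ᶜ
  have hTs : (T.induce s).IsTree :=
    ⟨hT.connected.induce_compl_singleton_of_degree_eq_one hv, hT.isAcyclic.induce s⟩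
  obtain ⟨x, hx⟩ := ih _ (hc ▸ Finite.card_subtype_lt (p := (· ∈ s)) (not_not_intro rfl))
    hTs (hJ.induce s) (fun k => hbag k) rfl
  obtain ⟨y, hy⟩ := hbag v
  have hus : u ∈ s := hvu.ne.symm
  set S : Set ι := ⋃ k : s, (J k : Set ι)
  have hJS : ∀ k : s, (J k : Set ι) ⊆ S := Set.subset_iUnion (fun k : s => (J k : Set ι))
  obtain ⟨z, hzx, hzy⟩ := exists_eqOn_and_inner_eq x y S (J v) <| by
    have hsep : ∀ a ∈ S ∩ J v, a ∈ J u := by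
      rintro a ⟨haS, hav⟩
      obtain ⟨k, hak⟩ := Set.mem_iUnion.mp haS
      exact hJ.mem_of_forall_adj_eq hT.connected hu k.2 hav hak
    intro a ha b hb
    rw [hx ⟨u, hus⟩ a (hsep a ha) b (hsep b hb), hy a ha.2 b hb.2]
  refine ⟨z, fun k a ha b hb => ?_⟩
  by_cases hk : k = v
  · subst hk
    rw [hzy a ha b hb, hy a ha b hb]
  · rw [hzx (hJS ⟨k, hk⟩ ha), hzx (hJS ⟨k, hk⟩ hb)]
    exact hx ⟨k, hk⟩ a ha b hb

end RunningIntersection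

theorem psd_completion_general {n ℓ : ℕ} (G : SimpleGraph (Fin n)) (T : SimpleGraph (Fin ℓ))
    (J : Fin ℓ → Finset (Fin n)) (hTD : IsTreeDecomp G T J)
    (Z : Matrix (Fin n) (Fin n) ℝ)
    (hZF : ∀ u v : Fin n, u ≠ v → (¬ ∃ k, u ∈ J k ∧ v ∈ J k) → Z u v = 0) :
    (∃ X : Matrix (Fin n) (Fin n) ℝ, X.PosSemidef ∧ projF J X = Z) ↔
      ∀ j : Fin ℓ, (psub Z (J j)).PosSemidef := by
  obtain ⟨hT, hcover, -, hJ⟩ := hTD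
  constructor
  · rintro ⟨X, hX, rfl⟩ j
    have hsub : psub (projF J X) (J j) = psub X (J j) := by
      ext a b
      simp only [psub, projF, submatrix_apply, of_apply]
      rw [if_pos (Or.inr ⟨j, a.2, b.2⟩)]
    exact hsub ▸ hX.submatrix _
  · intro hZ
    obtain ⟨x, hx⟩ :=
      hT.exists_inner_eq_on_bags hJ Z fun k => (hZ k).exists_inner_eq_of_submatrix
    refine ⟨gram ℝ x, posSemidef_gram ℝ x, ?_⟩
    ext a b
    simp only [projF, of_apply, gram_apply]
    split_ifs with h
    · obtain rfl | ⟨k, ha, hb⟩ := h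
      · obtain ⟨k, ha⟩ := hcover a
        exact hx k a ha a ha
      · exact hx k a ha b hb
    · rw [not_or] at h
      exact (hZF a b h.1 h.2).symm

/-- Grone et al.:  for `Z ∈ S_F`, there is a positive semidefinite completion
`X` with `P_F(X) = Z` iff every principal submatrix `Z[J j, J j]` is positive semidefinite. -/
theorem psd_completion {n ℓ : ℕ} (G : SimpleGraph (Fin n)) (T : SimpleGraph (Fin ℓ))
    (J : Fin ℓ → Finset (Fin n)) (hTD : IsTreeDecomp G T J)
    (Z : Matrix (Fin n) (Fin n) ℝ) (hZsymm : Z.IsSymm)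
    (hZF : ∀ u v : Fin n, u ≠ v → (¬ ∃ k, u ∈ J k ∧ v ∈ J k) → Z u v = 0) :
    (∃ X : Matrix (Fin n) (Fin n) ℝ, X.PosSemidef ∧ projF J X = Z) ↔
      ∀ j : Fin ℓ, (psub Z (J j)).PosSemidef :=
  psd_completion_general G T J hTD Z hZF
end

section
/- Let 𝒯 = ({J_1,…,J_ℓ}, T) be a tree decomposition of a graph G on n vertices and let F be its completion graph. For every real symmetric n×n matrix Z ∈ S_F, there exists an n×n real symmetric positive definite matrix X with P_F(X) = Z if and only if the principal submatrix Z[J_j,J_j] is positive definite for every j ∈ {1,…,ℓ}. -/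
/-!
Along any connected growth of the tree, the running intersection property makes each new bag
`J i` meet the union `U` of the earlier bags only inside one earlier bag `J p`, where all
entries are already fixed. So the bags can be added one at a time, and each step is a
completion problem whose only unknown entries form the block `(U \ J i) × (J i \ U)` and its
transpose. With `c = U ∩ J i` and `C = A[c, c]`, the classical choice
`A[U \ c, c] C⁻¹ A[c, J i \ U]` for that block splits the quadratic form as
`x ⬝ B x = y ⬝ A y + z ⬝ A z` with `x = y + z`, `y` supported in `U` and `z` in `J i`, so `B`
is positive definite on `U ∪ J i`. Conversely, principal submatrices of a positive definite
matrix are positive definite.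
-/

open Matrix

namespace Matrix

lemma exists_extend_by_zero {ι : Type*} [DecidableEq ι] {s : Finset ι} (y : s → ℝ) :
    ∃ x : ι → ℝ, (∀ i ∉ s, x i = 0) ∧ (fun i : s => x i) = y :=
  ⟨fun i => if hi : i ∈ s then y ⟨i, hi⟩ else 0, fun _ hi => dif_neg hi,
    funext fun i => dif_pos i.2⟩

variable {ι : Type*} [Fintype ι]

lemma sum_coe_sort_of_support {s : Finset ι} {f : ι → ℝ} (hf : ∀ i ∉ s, f i = 0) :
    ∑ i : s, f i = ∑ i, f i := by
  rw [Finset.sum_coe_sort]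
  exact Finset.sum_subset s.subset_univ fun i _ hi => hf i hi

lemma submatrix_val_mulVec {m : Type*} (A : Matrix ι ι ℝ) (f : m → ι) {s : Finset ι}
    {x : ι → ℝ} (hx : ∀ i ∉ s, x i = 0) :
    A.submatrix f ((↑) : s → ι) *ᵥ (fun j : s => x j) = fun i => (A *ᵥ x) (f i) := by
  ext i
  exact sum_coe_sort_of_support (f := fun j => A (f i) j * x j) fun j hj => by simp [hx j hj]

lemma dotProduct_submatrix_val_mulVec (A : Matrix ι ι ℝ) {s : Finset ι} {x : ι → ℝ}
    (hx : ∀ i ∉ s, x i = 0) :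
    (fun i : s => x i) ⬝ᵥ A.submatrix (↑) (↑) *ᵥ (fun i : s => x i) = x ⬝ᵥ A *ᵥ x := by
  rw [submatrix_val_mulVec A _ hx]
  exact sum_coe_sort_of_support (f := fun i => x i * (A *ᵥ x) i) fun i hi => by simp [hx i hi]

lemma IsSymm.dotProduct_mulVec_comm {A : Matrix ι ι ℝ} (hA : A.IsSymm) (p q : ι → ℝ) :
    p ⬝ᵥ A *ᵥ q = q ⬝ᵥ A *ᵥ p := by
  conv_lhs => rw [← hA.eq]
  exact dotProduct_transpose_mulVec A p q

lemma dotProduct_eq_zero_of_support {s : Finset ι} {p q : ι → ℝ} (hp : ∀ i ∉ s, p i = 0)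
    (hq : ∀ i ∈ s, q i = 0) : p ⬝ᵥ q = 0 :=
  Finset.sum_eq_zero fun i _ => by by_cases hi : i ∈ s <;> simp [hp, hq, hi]

def PosDefOn (A : Matrix ι ι ℝ) (s : Finset ι) : Prop :=
  ∀ x : ι → ℝ, (∀ i ∉ s, x i = 0) → x ≠ 0 → 0 < x ⬝ᵥ A *ᵥ x

lemma posDef_submatrix_val_iff [DecidableEq ι] {A : Matrix ι ι ℝ} (hA : A.IsSymm)
    (s : Finset ι) : (A.submatrix ((↑) : s → ι) (↑)).PosDef ↔ PosDefOn A s := by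
  rw [posDef_iff_dotProduct_mulVec]
  constructor
  · rintro ⟨-, hpos⟩ x hx hx0
    rw [← dotProduct_submatrix_val_mulVec A hx]
    refine hpos fun h => hx0 (funext fun i => ?_)
    by_cases hi : i ∈ s
    · exact congrFun h ⟨i, hi⟩
    · exact hx i hi
  · refine fun h => ⟨isHermitian_iff_isSymm.mpr (hA.submatrix _), fun y hy0 => ?_⟩
    obtain ⟨x, hx, hxy⟩ := exists_extend_by_zero y
    rw [star_trivial, ← hxy, dotProduct_submatrix_val_mulVec A hx]
    exact h x hx fun h0 => hy0 (hxy ▸ funext fun i => congrFun h0 i)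

namespace PosDefOn

variable {A B : Matrix ι ι ℝ} {s t : Finset ι}

lemma mono (h : PosDefOn A s) (hts : t ⊆ s) : PosDefOn A t :=
  fun x hx => h x fun i hi => hx i fun hit => hi (hts hit)

lemma nonneg (h : PosDefOn A s) {x : ι → ℝ} (hx : ∀ i ∉ s, x i = 0) : 0 ≤ x ⬝ᵥ A *ᵥ x := by
  rcases eq_or_ne x 0 with rfl | hx0
  · simp
  · exact (h x hx hx0).le

lemma congr (h : PosDefOn A s) (hAB : ∀ u ∈ s, ∀ v ∈ s, A u v = B u v) : PosDefOn B s := by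
  intro x hx hx0
  have hsub : A.submatrix ((↑) : s → ι) ((↑) : s → ι) = B.submatrix (↑) (↑) :=
    Matrix.ext fun u v => hAB u u.2 v v.2
  rw [← dotProduct_submatrix_val_mulVec B hx, ← hsub, dotProduct_submatrix_val_mulVec A hx]
  exact h x hx hx0

lemma posDef (h : PosDefOn A Finset.univ) (hA : A.IsSymm) : A.PosDef :=
  posDef_iff_dotProduct_mulVec.mpr ⟨isHermitian_iff_isSymm.mpr hA, fun x hx => by
    simpa using h x (by simp) hx⟩

lemma exists_mul_eq [DecidableEq ι] (h : PosDefOn A s) (hA : A.IsSymm) {κ : Type*}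
    (R : Matrix ι κ ℝ) :
    ∃ H : Matrix ι κ ℝ, (∀ i ∉ s, ∀ j, H i j = 0) ∧ ∀ i ∈ s, ∀ j, (A * H) i j = R i j := by
  have hsurj := mulVec_surjective_iff_isUnit.mpr ((posDef_submatrix_val_iff hA s).mpr h).isUnit
  choose y hy using fun j => hsurj fun i : s => R i j
  choose x hx hxy using fun j => exists_extend_by_zero (y j)
  refine ⟨of fun i j => x j i, fun i hi j => hx j i hi, fun i hi j => ?_⟩
  have := congrFun (submatrix_val_mulVec A (Subtype.val : s → ι) (hx j)) ⟨i, hi⟩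
  rw [hxy, hy] at this
  exact this.symm

lemma union_of_split [DecidableEq ι] (hs : PosDefOn A s) (ht : PosDefOn A t)
    (hsplit : ∀ x : ι → ℝ, (∀ i ∉ s ∪ t, x i = 0) → ∃ y z : ι → ℝ, (∀ i ∉ s, y i = 0) ∧
      (∀ i ∉ t, z i = 0) ∧ x = y + z ∧ x ⬝ᵥ B *ᵥ x = y ⬝ᵥ A *ᵥ y + z ⬝ᵥ A *ᵥ z) :
    PosDefOn B (s ∪ t) := by
  intro x hx hx0
  obtain ⟨y, z, hy, hz, rfl, hxyz⟩ := hsplit x hx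
  rw [hxyz]
  by_cases hy0 : y = 0
  · have hz0 : z ≠ 0 := by simpa [hy0] using hx0
    linarith [ht z hz hz0, hs.nonneg hy]
  · linarith [hs y hy hy0, ht.nonneg hz]

end PosDefOn

section TwoBlocks

variable [DecidableEq ι]

def blockRestrict (M : Matrix ι ι ℝ) (a b : Finset ι) : Matrix ι ι ℝ :=
  of fun u v => if u ∈ a ∧ v ∈ b then M u v else 0

lemma dotProduct_blockRestrict_mulVec (M : Matrix ι ι ℝ) (a b : Finset ι) (x y : ι → ℝ) :
    x ⬝ᵥ blockRestrict M a b *ᵥ y =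
      Set.indicator ↑a x ⬝ᵥ M *ᵥ Set.indicator ↑b y := by
  simp only [dotProduct, mulVec, blockRestrict, of_apply, Finset.mul_sum, Set.indicator_apply,
    Finset.mem_coe]
  refine Finset.sum_congr rfl fun u _ => Finset.sum_congr rfl fun v _ => ?_
  split_ifs <;> simp_all

/-- With `H = C⁻¹ A[s ∩ t, ·]` extended by zero, where `C = A[s ∩ t, s ∩ t]`, the block
`(s \ t) × (t \ s)` of this matrix is `A[s \ t, s ∩ t] C⁻¹ A[s ∩ t, t \ s]`. -/
def twoBlockCompletion (A H : Matrix ι ι ℝ) (s t : Finset ι) : Matrix ι ι ℝ :=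
  A - blockRestrict (A - A * H) (s \ t) (t \ s) - (blockRestrict (A - A * H) (s \ t) (t \ s))ᵀ

variable {A H : Matrix ι ι ℝ} {s t : Finset ι}

lemma twoBlockCompletion_isSymm (hA : A.IsSymm) : (twoBlockCompletion A H s t).IsSymm := by
  rw [IsSymm, twoBlockCompletion, transpose_sub, transpose_sub, hA.eq, transpose_transpose,
    sub_right_comm]

lemma twoBlockCompletion_apply {u v : ι} (huv : (u ∈ s ∧ v ∈ s) ∨ (u ∈ t ∧ v ∈ t)) :
    twoBlockCompletion A H s t u v = A u v := by
  have hu : ¬ (u ∈ s \ t ∧ v ∈ t \ s) := by simp only [Finset.mem_sdiff]; tauto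
  have hv : ¬ (v ∈ s \ t ∧ u ∈ t \ s) := by simp only [Finset.mem_sdiff]; tauto
  simp only [twoBlockCompletion, blockRestrict, sub_apply, transpose_apply, of_apply, if_neg hu,
    if_neg hv, sub_zero]

lemma dotProduct_twoBlockCompletion_mulVec (x : ι → ℝ) :
    x ⬝ᵥ twoBlockCompletion A H s t *ᵥ x = x ⬝ᵥ A *ᵥ x -
      2 * (Set.indicator ↑(s \ t) x ⬝ᵥ (A - A * H) *ᵥ Set.indicator ↑(t \ s) x) := by
  rw [twoBlockCompletion, sub_mulVec, sub_mulVec, dotProduct_sub, dotProduct_sub,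
    dotProduct_transpose_mulVec, dotProduct_blockRestrict_mulVec]
  ring

lemma exists_split_twoBlockCompletion (hA : A.IsSymm) (hH : ∀ i ∉ s ∩ t, ∀ j, H i j = 0)
    (hAH : ∀ i ∈ s ∩ t, ∀ j, (A * H) i j = A i j) {x : ι → ℝ} (hx : ∀ i ∉ s ∪ t, x i = 0) :
    ∃ y z : ι → ℝ, (∀ i ∉ s, y i = 0) ∧ (∀ i ∉ t, z i = 0) ∧ x = y + z ∧
      x ⬝ᵥ twoBlockCompletion A H s t *ᵥ x = y ⬝ᵥ A *ᵥ y + z ⬝ᵥ A *ᵥ z := by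
  set xb := Set.indicator ↑(t \ s) x
  set g := H *ᵥ xb with hg_def
  have hg : ∀ i ∉ s ∩ t, g i = 0 := fun i hi =>
    Finset.sum_eq_zero fun j _ => by simp [hH i hi]
  have hAg : ∀ i ∈ s ∩ t, (A *ᵥ g) i = (A *ᵥ xb) i := fun i hi => by
    rw [hg_def, mulVec_mulVec]
    simp only [mulVec, dotProduct, hAH i hi]
  have hform := dotProduct_twoBlockCompletion_mulVec (A := A) (H := H) (s := s) (t := t) x
  rw [sub_mulVec, ← mulVec_mulVec, ← mulVec_sub, ← hg_def] at hform
  clear_value g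
  set z := xb - g
  set y := x - z
  -- `z` is the `t \ s` part of `x`, corrected on `s ∩ t` so that `A z` vanishes there
  have hAz : ∀ i ∈ s ∩ t, (A *ᵥ z) i = 0 := fun i hi => by
    rw [mulVec_sub, Pi.sub_apply, hAg i hi, sub_self]
  have hz : ∀ i ∉ t, z i = 0 := fun i hi => by
    simp [z, xb, hi, hg i (by simp [hi])]
  set xa := Set.indicator ↑(s \ t) x
  have hya : ∀ i ∉ s ∩ t, (y - xa) i = 0 := fun i hi => by
    have hgi := hg i hi
    by_cases his : i ∈ s
    · have hit : i ∉ t := fun hit => hi (Finset.mem_inter.mpr ⟨his, hit⟩)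
      simp [y, z, xa, xb, his, hit, hgi]
    · by_cases hit : i ∈ t
      · simp [y, z, xa, xb, his, hit, hgi]
      · simp [y, z, xa, xb, his, hit, hgi, hx i (by simp [his, hit])]
  have hy : ∀ i ∉ s, y i = 0 := fun i hi => by
    simpa [xa, hi] using hya i (by simp [hi])
  have hcross : y ⬝ᵥ A *ᵥ z = xa ⬝ᵥ A *ᵥ z := by
    rw [← sub_eq_zero, ← sub_dotProduct]
    exact dotProduct_eq_zero_of_support hya hAz
  have hxyz : x = y + z := (sub_add_cancel x z).symm
  refine ⟨y, z, hy, hz, hxyz, ?_⟩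
  rw [hform, hxyz, add_dotProduct, mulVec_add, dotProduct_add, dotProduct_add,
    hA.dotProduct_mulVec_comm z y, hcross]
  ring

theorem exists_posDefOn_union {A : Matrix ι ι ℝ} (hA : A.IsSymm) {s t : Finset ι}
    (hs : PosDefOn A s) (ht : PosDefOn A t) :
    ∃ B : Matrix ι ι ℝ, B.IsSymm ∧ PosDefOn B (s ∪ t) ∧
      ∀ u v, (u ∈ s ∧ v ∈ s) ∨ (u ∈ t ∧ v ∈ t) → B u v = A u v := by
  obtain ⟨H, hH, hAH⟩ := (hs.mono (Finset.inter_subset_left (s₂ := t))).exists_mul_eq hA A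
  exact ⟨twoBlockCompletion A H s t, twoBlockCompletion_isSymm hA,
    hs.union_of_split ht fun x hx => exists_split_twoBlockCompletion hA hH hAH hx,
    fun u v => twoBlockCompletion_apply⟩

theorem exists_posDefOn_union_of_eqOn_inter {X Z : Matrix ι ι ℝ} (hX : X.IsSymm)
    (hZ : Z.IsSymm) {s t : Finset ι} (hXs : PosDefOn X s) (hZt : PosDefOn Z t)
    (hXZ : ∀ u ∈ s ∩ t, ∀ v ∈ s ∩ t, X u v = Z u v) :
    ∃ B : Matrix ι ι ℝ, B.IsSymm ∧ PosDefOn B (s ∪ t) ∧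
      (∀ u ∈ s, ∀ v ∈ s, B u v = X u v) ∧ ∀ u ∈ t, ∀ v ∈ t, B u v = Z u v := by
  set Y : Matrix ι ι ℝ := of fun u v => if u ∈ t ∧ v ∈ t then Z u v else X u v
  have hY : Y.IsSymm := Matrix.ext fun u v => by
    simp only [Y, transpose_apply, of_apply, hX.apply, hZ.apply, and_comm]
  have hYX : ∀ u ∈ s, ∀ v ∈ s, Y u v = X u v := fun u hu v hv => by
    by_cases huv : u ∈ t ∧ v ∈ t
    · simp only [Y, of_apply, if_pos huv]
      exact (hXZ u (Finset.mem_inter.mpr ⟨hu, huv.1⟩) v (Finset.mem_inter.mpr ⟨hv, huv.2⟩)).symm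
    · simp only [Y, of_apply, if_neg huv]
  have hYZ : ∀ u ∈ t, ∀ v ∈ t, Y u v = Z u v := fun u hu v hv => by
    simp only [Y, of_apply, if_pos (And.intro hu hv)]
  obtain ⟨B, hB, hBpos, hBY⟩ := exists_posDefOn_union hY
    (hXs.congr fun u hu v hv => (hYX u hu v hv).symm)
    (hZt.congr fun u hu v hv => (hYZ u hu v hv).symm)
  exact ⟨B, hB, hBpos, fun u hu v hv => (hBY u v (Or.inl ⟨hu, hv⟩)).trans (hYX u hu v hv),
    fun u hu v hv => (hBY u v (Or.inr ⟨hu, hv⟩)).trans (hYZ u hu v hv)⟩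

end TwoBlocks

end Matrix

namespace SimpleGraph

variable {V : Type*} {T : SimpleGraph V}

def ReachesWithin (T : SimpleGraph V) (r : V) (S : Finset V) : Prop :=
  ∀ k ∈ S, ∃ w : T.Walk r k, ∀ x ∈ w.support, x ∈ S

namespace ReachesWithin

variable {r : V} {S : Finset V}

lemma singleton (r : V) : T.ReachesWithin r {r} := fun k hk => by
  rw [Finset.mem_singleton] at hk
  subst hk
  exact ⟨Walk.nil, by simp⟩

lemma insert [DecidableEq V] (h : T.ReachesWithin r S) {p q : V} (hp : p ∈ S)
    (hpq : T.Adj p q) : T.ReachesWithin r (insert q S) := by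
  intro k hk
  rcases Finset.mem_insert.mp hk with rfl | hk
  · obtain ⟨w, hw⟩ := h p hp
    refine ⟨w.concat hpq, fun x hx => ?_⟩
    rw [Walk.support_concat, List.mem_append, List.mem_singleton] at hx
    rcases hx with hx | rfl
    · exact Finset.mem_insert_of_mem (hw x hx)
    · exact Finset.mem_insert_self x S
  · obtain ⟨w, hw⟩ := h k hk
    exact ⟨w, fun x hx => Finset.mem_insert_of_mem (hw x hx)⟩

lemma exists_isPath [DecidableEq V] (h : T.ReachesWithin r S) {a b : V} (ha : a ∈ S)
    (hb : b ∈ S) : ∃ w : T.Walk a b, w.IsPath ∧ ∀ x ∈ w.support, x ∈ S := by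
  obtain ⟨wa, hwa⟩ := h a ha
  obtain ⟨wb, hwb⟩ := h b hb
  refine ⟨(wa.reverse.append wb).bypass, Walk.bypass_isPath _, fun x hx => ?_⟩
  have hx' := Walk.support_bypass_subset_support _ hx
  rw [Walk.mem_support_append_iff, Walk.support_reverse, List.mem_reverse] at hx'
  exact hx'.elim (hwa x) (hwb x)

lemma biUnion_inter_subset {ι : Type*} [DecidableEq ι] [DecidableEq V] {J : V → Finset ι}
    (hRIP : ∀ (i j : V) (w : T.Walk i j), w.IsPath →
      ∀ v : ι, v ∈ J i → v ∈ J j → ∀ k ∈ w.support, v ∈ J k)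
    (hS : T.ReachesWithin r S) {p q : V} (hp : p ∈ S) (hq : q ∉ S) (hqp : T.Adj q p) :
    S.biUnion J ∩ J q ⊆ J p := by
  intro v hv
  obtain ⟨hvS, hvq⟩ := Finset.mem_inter.mp hv
  obtain ⟨k, hk, hvk⟩ := Finset.mem_biUnion.mp hvS
  obtain ⟨w, hw, hwS⟩ := hS.exists_isPath hp hk
  exact hRIP q k (.cons hqp w) (hw.cons fun hqw => hq (hwS q hqw)) v hvq hvk p (by simp)

end ReachesWithin

lemma Connected.exists_adj_of_mem_of_notMem (hT : T.Connected) {S : Set V} {a b : V}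
    (ha : a ∈ S) (hb : b ∉ S) : ∃ p ∈ S, ∃ q ∉ S, T.Adj p q := by
  obtain ⟨w⟩ := hT.preconnected a b
  obtain ⟨d, -, hd1, hd2⟩ := w.exists_boundary_dart S ha hb
  exact ⟨d.fst, hd1, d.snd, hd2, d.adj⟩

end SimpleGraph

namespace Matrix

variable {ι V : Type*} [Fintype ι] [DecidableEq ι]

def IsPosDefCompletionOn (Z : Matrix ι ι ℝ) (J : V → Finset ι) (S : Finset V)
    (X : Matrix ι ι ℝ) : Prop :=
  X.IsSymm ∧ PosDefOn X (S.biUnion J) ∧ ∀ k ∈ S, ∀ u ∈ J k, ∀ v ∈ J k, X u v = Z u v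

lemma IsPosDefCompletionOn.insert [DecidableEq V] {Z X : Matrix ι ι ℝ} {J : V → Finset ι}
    {S : Finset V} (hX : IsPosDefCompletionOn Z J S X) (hZ : Z.IsSymm) {i p : V}
    (hi : PosDefOn Z (J i)) (hp : p ∈ S) (hsep : S.biUnion J ∩ J i ⊆ J p) :
    ∃ X' : Matrix ι ι ℝ, IsPosDefCompletionOn Z J (insert i S) X' := by
  obtain ⟨hXs, hXpos, hXZ⟩ := hX
  obtain ⟨B, hB, hBpos, hBX, hBZ⟩ := exists_posDefOn_union_of_eqOn_inter hXs hZ hXpos hi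
    fun u hu v hv => hXZ p hp u (hsep hu) v (hsep hv)
  refine ⟨B, hB, by rwa [Finset.biUnion_insert, Finset.union_comm], fun k hk u hu v hv => ?_⟩
  rcases Finset.mem_insert.mp hk with rfl | hk
  · exact hBZ u hu v hv
  · have hsub := Finset.subset_biUnion_of_mem J hk
    exact (hBX u (hsub hu) v (hsub hv)).trans (hXZ k hk u hu v hv)

variable {T : SimpleGraph V} {J : V → Finset ι}

lemma isPosDefCompletionOn_singleton {Z : Matrix ι ι ℝ} (hZ : Z.IsSymm) {r : V}
    (hr : PosDefOn Z (J r)) : IsPosDefCompletionOn Z J {r} Z :=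
  ⟨hZ, by simpa using hr, by simp⟩

theorem exists_isPosDefCompletionOn_univ [Fintype V] (hT : T.Connected)
    (hRIP : ∀ (i j : V) (w : T.Walk i j), w.IsPath →
      ∀ v : ι, v ∈ J i → v ∈ J j → ∀ k ∈ w.support, v ∈ J k)
    {Z : Matrix ι ι ℝ} (hZ : Z.IsSymm) (hJ : ∀ k, PosDefOn Z (J k)) :
    ∃ X : Matrix ι ι ℝ, IsPosDefCompletionOn Z J Finset.univ X := by
  classical
  obtain ⟨r⟩ := hT.nonempty
  let good : Finset (Finset V) := Finset.univ.filter fun S =>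
    r ∈ S ∧ T.ReachesWithin r S ∧ ∃ X, IsPosDefCompletionOn Z J S X
  have hgood : ∀ S, S ∈ good ↔ r ∈ S ∧ T.ReachesWithin r S ∧
      ∃ X, IsPosDefCompletionOn Z J S X := by
    simp [good]
  obtain ⟨S, hS, hmax⟩ := good.exists_max_image Finset.card ⟨{r}, (hgood _).mpr
    ⟨Finset.mem_singleton_self r, .singleton r, Z, isPosDefCompletionOn_singleton hZ (hJ r)⟩⟩
  obtain ⟨hr, hSr, X, hX⟩ := (hgood S).mp hS
  suffices hSuniv : S = Finset.univ from ⟨X, hSuniv ▸ hX⟩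
  refine Finset.eq_univ_iff_forall.mpr fun b => by_contra fun hb => ?_
  obtain ⟨p, hp, q, hq, hpq⟩ := hT.exists_adj_of_mem_of_notMem (S := (S : Set V)) hr hb
  obtain ⟨X', hX'⟩ := hX.insert hZ (hJ q) hp (hSr.biUnion_inter_subset hRIP hp hq hpq.symm)
  have := hmax _ ((hgood _).mpr
    ⟨Finset.mem_insert_of_mem hr, hSr.insert hp hpq, X', hX'⟩)
  rw [Finset.card_insert_of_notMem hq] at this
  omega

theorem exists_posDef_completion [Fintype V] (hT : T.Connected) (hcov : ∀ u, ∃ k, u ∈ J k)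
    (hRIP : ∀ (i j : V) (w : T.Walk i j), w.IsPath →
      ∀ v : ι, v ∈ J i → v ∈ J j → ∀ k ∈ w.support, v ∈ J k)
    {Z : Matrix ι ι ℝ} (hZ : Z.IsSymm) (hJ : ∀ k, PosDefOn Z (J k)) :
    ∃ X : Matrix ι ι ℝ, X.PosDef ∧ ∀ k, ∀ u ∈ J k, ∀ v ∈ J k, X u v = Z u v := by
  obtain ⟨X, hXs, hXpos, hXZ⟩ := exists_isPosDefCompletionOn_univ hT hRIP hZ hJ
  refine ⟨X, (hXpos.mono fun u _ => ?_).posDef hXs, fun k => hXZ k (Finset.mem_univ k)⟩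
  obtain ⟨k, hk⟩ := hcov u
  exact Finset.mem_biUnion.mpr ⟨k, Finset.mem_univ k, hk⟩

end Matrix

/-- Grone et al., positive definite version:  for `Z ∈ S_F`, there is a
positive definite completion `X` with `P_F(X) = Z` iff every principal submatrix
`Z[J j, J j]` is positive definite. -/
theorem pd_completion {n ℓ : ℕ} (G : SimpleGraph (Fin n)) (T : SimpleGraph (Fin ℓ))
    (J : Fin ℓ → Finset (Fin n)) (hTD : IsTreeDecomp G T J)
    (Z : Matrix (Fin n) (Fin n) ℝ) (hZsymm : Z.IsSymm)
    (hZF : ∀ u v : Fin n, u ≠ v → (¬ ∃ k, u ∈ J k ∧ v ∈ J k) → Z u v = 0) :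
    (∃ X : Matrix (Fin n) (Fin n) ℝ, X.PosDef ∧ projF J X = Z) ↔
      ∀ j : Fin ℓ, (psub Z (J j)).PosDef := by
  obtain ⟨hT, hcov, -, hRIP⟩ := hTD
  constructor
  · rintro ⟨X, hX, rfl⟩ j
    convert hX.submatrix Subtype.val_injective using 1
    ext u v
    have huv : ∃ k, (u : Fin n) ∈ J k ∧ (v : Fin n) ∈ J k := ⟨j, u.2, v.2⟩
    simp [psub, projF, huv]
  · intro hJ
    obtain ⟨X, hX, hXZ⟩ := exists_posDef_completion hT.connected hcov hRIP hZsymm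
      fun j => (posDef_submatrix_val_iff hZsymm _).mp (hJ j)
    refine ⟨X, hX, Matrix.ext fun u v => ?_⟩
    by_cases huv : u = v ∨ ∃ k, u ∈ J k ∧ v ∈ J k
    · rw [projF, of_apply, if_pos huv]
      rcases huv with rfl | ⟨k, hu, hv⟩
      · obtain ⟨k, hk⟩ := hcov u
        exact hXZ k u hk u hk
      · exact hXZ k u hu v hv
    · rw [projF, of_apply, if_neg huv]
      exact (hZF u v (fun h => huv (.inl h)) fun h => huv (.inr h)).symm
end

section
/- Let 𝒯 = ({J_1,…,J_ℓ}, T) be a tree decomposition of a graph G on n vertices and let F be its completion graph. A real symmetric n×n matrix S ∈ S_F is positive definite if and only if there exist real symmetric positive definite matrices H_1,…,H_ℓ, with H_j indexed by J_j × J_j, such that S[u,v] = Σ_{j : u ∈ J_j and v ∈ J_j} H_j[u,v] for all u, v ∈ {1,…,n} (i.e., S is the sum over bags of the zero-padded embeddings of the H_j into positions J_j × J_j). -/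
open Matrix

/-!
A sum of zero-extended positive definite blocks whose index sets cover all vertices is positive
definite, which gives one direction.

For the other, induct on the number of bags. Let `A` be the bag of a leaf `k` of the tree and `C`
the union of the other bags. By the running-intersection property `A ∩ C` lies in the bag of the
neighbour of `k`, and `S` vanishes between `W = A \ C` and `D = C \ A`. Eliminating `W` and then
`D` leaves a positive definite Schur complement `K` on `B = A ∩ C`. Split `S = N + (S - N)`, where
`N` agrees with `S` on the rows of `W` and `S - N` is supported on `C`, so that each part has
Schur complement `K₂ = K / 2` on `B`; the Schur-complement criterion makes both positive
definite, and `S - N` is decomposed along the smaller tree.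
-/

lemma Finset.sum_ite_coe_eq {V : Type*} [DecidableEq V] (s : Finset V) (f : s → ℝ) (v : V) :
    (∑ a : s, if (a : V) = v then f a else 0) = if h : v ∈ s then f ⟨v, h⟩ else 0 := by
  split_ifs with h
  · rw [Fintype.sum_eq_single ⟨v, h⟩ fun a ha => if_neg fun e => ha (Subtype.ext e),
      if_pos rfl]
  · exact Finset.sum_eq_zero fun a _ => if_neg fun e : (a : V) = v => h (e ▸ a.2)

namespace Matrix

variable {V : Type*}

lemma dotProduct_mulVec_comm_of_isSymm {ι : Type*} [Fintype ι] {S : Matrix ι ι ℝ}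
    (hS : S.IsSymm) (x y : ι → ℝ) : x ⬝ᵥ (S *ᵥ y) = (S *ᵥ x) ⬝ᵥ y := by
  rw [dotProduct_mulVec, ← vecMul_transpose, hS.eq]

lemma mem_of_ne_zero_of_isSymm {t : Finset V} {M : Matrix V V ℝ} (hM : M.IsSymm)
    (h : ∀ u ∉ t, ∀ v, M u v = 0) (u v : V) (huv : M u v ≠ 0) : u ∈ t ∧ v ∈ t :=
  ⟨by_contra fun hu => huv (h u hu v),
    by_contra fun hv => huv (by rw [← hM.apply u v]; exact h v hv u)⟩

lemma submatrix_sub_of_forall_eq_zero {s : Finset V} {S E : Matrix V V ℝ}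
    (hE : ∀ u ∈ s, ∀ v, E u v = 0) :
    (S - E).submatrix ((↑) : s → V) ((↑) : s → V) = S.submatrix (↑) (↑) := by
  ext a b
  simp [hE a a.2 b]

section PosDefOn

variable [Fintype V] {s : Finset V} {S : Matrix V V ℝ}

structure IsPosDefOn (S : Matrix V V ℝ) (s : Finset V) : Prop where
  isSymm : S.IsSymm
  mem_of_ne_zero : ∀ u v, S u v ≠ 0 → u ∈ s ∧ v ∈ s
  pos : ∀ x : V → ℝ, x ≠ 0 → (∀ v ∉ s, x v = 0) → 0 < x ⬝ᵥ (S *ᵥ x)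

lemma IsPosDefOn.apply_eq_zero (h : IsPosDefOn S s) {u v : V} (huv : ¬(u ∈ s ∧ v ∈ s)) :
    S u v = 0 :=
  by_contra fun hne => huv (h.mem_of_ne_zero u v hne)

lemma IsPosDefOn.apply_eq_zero_of_subset {t : Finset V} (h : IsPosDefOn S s) (hst : s ⊆ t)
    {u v : V} (huv : ¬(u ∈ t ∧ v ∈ t)) : S u v = 0 :=
  h.apply_eq_zero fun hs => huv ⟨hst hs.1, hst hs.2⟩

lemma IsPosDefOn.smul (h : IsPosDefOn S s) {c : ℝ} (hc : 0 < c) : IsPosDefOn (c • S) s where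
  isSymm := by rw [IsSymm, transpose_smul, h.isSymm.eq]
  mem_of_ne_zero u v huv := h.mem_of_ne_zero u v fun h0 => huv (by rw [smul_apply, h0, smul_zero])
  pos x hx hxs := by
    rw [smul_mulVec, dotProduct_smul, smul_eq_mul]
    exact mul_pos hc (h.pos x hx hxs)

lemma isPosDefOn_univ_iff : IsPosDefOn S Finset.univ ↔ S.PosDef := by
  refine ⟨fun h => posDef_iff_dotProduct_mulVec.mpr ⟨?_, fun x hx => ?_⟩,
    fun h => ⟨?_, ?_, ?_⟩⟩
  · rw [IsHermitian, conjTranspose_eq_transpose_of_trivial]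
    exact h.isSymm
  · rw [star_trivial]
    exact h.pos x hx fun v hv => absurd (Finset.mem_univ v) hv
  · rw [IsSymm, ← conjTranspose_eq_transpose_of_trivial]
    exact h.isHermitian
  · exact fun u v _ => ⟨Finset.mem_univ u, Finset.mem_univ v⟩
  · intro x hx _
    simpa using h.dotProduct_mulVec_pos hx

end PosDefOn

variable [DecidableEq V]

def restriction (s : Finset V) : Matrix s V ℝ := (1 : Matrix V V ℝ).submatrix (↑) id

def zeroExtend (s : Finset V) (M : Matrix s s ℝ) : Matrix V V ℝ :=
  (restriction s)ᵀ * M * restriction s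

section restriction

variable (s : Finset V)

lemma transpose_restriction_mulVec_apply (y : s → ℝ) (v : V) :
    ((restriction s)ᵀ *ᵥ y) v = if h : v ∈ s then y ⟨v, h⟩ else 0 := by
  simp only [restriction, mulVec, dotProduct, transpose_apply, submatrix_apply, id, one_apply,
    ite_mul, one_mul, zero_mul, Finset.sum_ite_coe_eq]

lemma zeroExtend_apply (M : Matrix s s ℝ) (u v : V) :
    zeroExtend s M u v = if h : u ∈ s ∧ v ∈ s then M ⟨u, h.1⟩ ⟨v, h.2⟩ else 0 := by
  simp only [zeroExtend, mul_apply, transpose_apply, restriction, submatrix_apply, id, one_apply,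
    ite_mul, one_mul, zero_mul, mul_ite, mul_one, mul_zero, Finset.sum_ite_coe_eq]
  by_cases hu : u ∈ s <;> by_cases hv : v ∈ s <;> simp [hu, hv]

lemma transpose_zeroExtend (M : Matrix s s ℝ) : (zeroExtend s M)ᵀ = zeroExtend s Mᵀ := by
  rw [zeroExtend, zeroExtend, transpose_mul, transpose_mul, transpose_transpose, Matrix.mul_assoc]

end restriction

noncomputable def blockInv (S : Matrix V V ℝ) (s : Finset V) : Matrix V V ℝ :=
  zeroExtend s (S.submatrix ((↑) : s → V) (↑))⁻¹

lemma transpose_blockInv {s : Finset V} {S : Matrix V V ℝ} (hS : S.IsSymm) :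
    (blockInv S s)ᵀ = blockInv S s := by
  rw [blockInv, transpose_zeroExtend, transpose_nonsing_inv, transpose_submatrix, hS.eq]

variable [Fintype V]

section restriction

variable (s : Finset V)

@[simp]
lemma restriction_mul {β : Type*} (X : Matrix V β ℝ) :
    restriction s * X = X.submatrix (↑) id :=
  one_submatrix_mul _ (Equiv.refl V) X

@[simp]
lemma mul_transpose_restriction {β : Type*} [Fintype β] (X : Matrix β V ℝ) :
    X * (restriction s)ᵀ = X.submatrix id (↑) := by
  rw [restriction, transpose_submatrix, transpose_one]
  exact mul_submatrix_one (Equiv.refl V) _ X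

lemma restriction_mul_transpose : restriction s * (restriction s)ᵀ = 1 := by
  rw [mul_transpose_restriction, restriction, submatrix_submatrix]
  exact submatrix_one _ Subtype.val_injective

@[simp]
lemma restriction_mulVec (x : V → ℝ) : restriction s *ᵥ x = fun a : s => x a := by
  ext a
  simp [restriction, mulVec, dotProduct, one_apply]

lemma submatrix_eq_restriction_mul (S : Matrix V V ℝ) :
    S.submatrix ((↑) : s → V) (↑) = restriction s * S * (restriction s)ᵀ := by
  simp

lemma dotProduct_transpose_restriction_mulVec (x : V → ℝ) (y : s → ℝ) :
    x ⬝ᵥ ((restriction s)ᵀ *ᵥ y) = (restriction s *ᵥ x) ⬝ᵥ y := by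
  rw [dotProduct_mulVec, vecMul_transpose]

lemma dotProduct_zeroExtend_mulVec (M : Matrix s s ℝ) (x y : V → ℝ) :
    x ⬝ᵥ (zeroExtend s M *ᵥ y) =
      (restriction s *ᵥ x) ⬝ᵥ (M *ᵥ (restriction s *ᵥ y)) := by
  rw [zeroExtend, ← mulVec_mulVec, ← mulVec_mulVec, dotProduct_transpose_restriction_mulVec]

lemma dotProduct_submatrix_mulVec (S : Matrix V V ℝ) (y : s → ℝ) :
    y ⬝ᵥ (S.submatrix (↑) (↑) *ᵥ y) =
      ((restriction s)ᵀ *ᵥ y) ⬝ᵥ (S *ᵥ ((restriction s)ᵀ *ᵥ y)) := by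
  rw [submatrix_eq_restriction_mul, ← mulVec_mulVec, ← mulVec_mulVec, dotProduct_comm y,
    ← dotProduct_transpose_restriction_mulVec, dotProduct_comm]

lemma zeroExtend_mul_mul_zeroExtend (M N : Matrix s s ℝ) (X : Matrix V V ℝ) :
    zeroExtend s M * X * zeroExtend s N = zeroExtend s (M * X.submatrix (↑) (↑) * N) := by
  simp only [zeroExtend, submatrix_eq_restriction_mul, Matrix.mul_assoc]

lemma restriction_mulVec_ne_zero {x : V → ℝ} (hx : x ≠ 0) (hxs : ∀ v ∉ s, x v = 0) :
    restriction s *ᵥ x ≠ 0 := by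
  obtain ⟨v, hv⟩ := Function.ne_iff.mp hx
  rw [restriction_mulVec]
  exact Function.ne_iff.mpr ⟨⟨v, by_contra fun h => hv (hxs v h)⟩, hv⟩

lemma dotProduct_mulVec_eq_of_supported (S : Matrix V V ℝ) {x : V → ℝ}
    (hx : ∀ v ∉ s, x v = 0) :
    x ⬝ᵥ (S *ᵥ x) =
      (restriction s *ᵥ x) ⬝ᵥ (S.submatrix (↑) (↑) *ᵥ (restriction s *ᵥ x)) := by
  have hRx : (restriction s)ᵀ *ᵥ (restriction s *ᵥ x) = x := by
    ext v
    rw [transpose_restriction_mulVec_apply]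
    split_ifs with hv
    · rw [restriction_mulVec]
    · exact (hx v hv).symm
  rw [dotProduct_submatrix_mulVec, hRx]

end restriction

section PosDefOn

variable {s t : Finset V} {S : Matrix V V ℝ}

lemma IsPosDefOn.zeroExtend_submatrix (h : IsPosDefOn S s) :
    zeroExtend s (S.submatrix (↑) (↑)) = S := by
  ext u v
  rw [zeroExtend_apply]
  split_ifs with huv
  · rfl
  · exact (h.apply_eq_zero huv).symm

lemma IsPosDefOn.posDef_submatrix (h : IsPosDefOn S t) (hst : s ⊆ t) :
    (S.submatrix ((↑) : s → V) (↑)).PosDef := by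
  refine posDef_iff_dotProduct_mulVec.mpr ⟨?_, fun y hy => ?_⟩
  · ext a b
    exact h.isSymm.apply a b
  · have hRy : restriction s *ᵥ ((restriction s)ᵀ *ᵥ y) = y := by
      rw [mulVec_mulVec, restriction_mul_transpose, one_mulVec]
    rw [star_trivial, dotProduct_submatrix_mulVec]
    exact h.pos _ (fun h0 => hy (by rw [← hRy, h0, mulVec_zero]))
      fun v hv => by rw [transpose_restriction_mulVec_apply, dif_neg fun hs => hv (hst hs)]

lemma isPosDefOn_zeroExtend {M : Matrix s s ℝ} (hM : M.PosDef) :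
    IsPosDefOn (zeroExtend s M) s where
  isSymm := by
    rw [IsSymm, transpose_zeroExtend,
      ← conjTranspose_eq_transpose_of_trivial, hM.isHermitian.eq]
  mem_of_ne_zero u v h := by_contra fun huv => h (by rw [zeroExtend_apply, dif_neg huv])
  pos x hx hxs := by
    rw [dotProduct_zeroExtend_mulVec]
    simpa using hM.dotProduct_mulVec_pos (restriction_mulVec_ne_zero s hx hxs)

lemma isPosDefOn_iff_exists_posDef :
    IsPosDefOn S s ↔ ∃ M : Matrix s s ℝ, M.PosDef ∧ zeroExtend s M = S :=
  ⟨fun h => ⟨_, h.posDef_submatrix subset_rfl, h.zeroExtend_submatrix⟩,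
    fun ⟨_, hM, hMS⟩ => hMS ▸ isPosDefOn_zeroExtend hM⟩

lemma IsPosDefOn.dotProduct_mulVec_eq (h : IsPosDefOn S s) (x : V → ℝ) :
    x ⬝ᵥ (S *ᵥ x) =
      (restriction s *ᵥ x) ⬝ᵥ (S.submatrix (↑) (↑) *ᵥ (restriction s *ᵥ x)) := by
  conv_lhs => rw [← h.zeroExtend_submatrix]
  exact dotProduct_zeroExtend_mulVec s _ x x

lemma IsPosDefOn.dotProduct_mulVec_nonneg (h : IsPosDefOn S s) (x : V → ℝ) :
    0 ≤ x ⬝ᵥ (S *ᵥ x) := by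
  rw [h.dotProduct_mulVec_eq]
  simpa using (h.posDef_submatrix subset_rfl).posSemidef.dotProduct_mulVec_nonneg _

lemma IsPosDefOn.dotProduct_mulVec_pos (h : IsPosDefOn S s) {x : V → ℝ} {v : V} (hv : v ∈ s)
    (hx : x v ≠ 0) : 0 < x ⬝ᵥ (S *ᵥ x) := by
  rw [h.dotProduct_mulVec_eq]
  have hRx : restriction s *ᵥ x ≠ 0 := by
    rw [restriction_mulVec]
    exact Function.ne_iff.mpr ⟨⟨v, hv⟩, hx⟩
  simpa using (h.posDef_submatrix subset_rfl).dotProduct_mulVec_pos hRx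

lemma IsPosDefOn.add {A B : Matrix V V ℝ} (hA : IsPosDefOn A s) (hB : IsPosDefOn B t) :
    IsPosDefOn (A + B) (s ∪ t) where
  isSymm := hA.isSymm.add hB.isSymm
  mem_of_ne_zero u v h := by_contra fun huv => h <| by
    rw [add_apply, hA.apply_eq_zero_of_subset Finset.subset_union_left huv,
      hB.apply_eq_zero_of_subset Finset.subset_union_right huv, add_zero]
  pos x hx hxs := by
    obtain ⟨v, hv⟩ := Function.ne_iff.mp hx
    rw [add_mulVec, dotProduct_add]
    rcases Finset.mem_union.mp (by_contra fun h => hv (hxs v h)) with hvs | hvt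
    · exact add_pos_of_pos_of_nonneg (hA.dotProduct_mulVec_pos hvs hv)
        (hB.dotProduct_mulVec_nonneg x)
    · exact add_pos_of_nonneg_of_pos (hA.dotProduct_mulVec_nonneg x)
        (hB.dotProduct_mulVec_pos hvt hv)

lemma IsPosDefOn.sum {ι : Type*} [DecidableEq ι] {M : ι → Matrix V V ℝ} {J : ι → Finset V}
    (I : Finset ι) (h : ∀ j ∈ I, IsPosDefOn (M j) (J j)) :
    IsPosDefOn (∑ j ∈ I, M j) (I.biUnion J) := by
  induction I using Finset.induction_on with
  | empty =>
    refine ⟨isSymm_zero, fun u v h0 => absurd rfl h0, fun x hx hxs => absurd ?_ hx⟩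
    ext v
    exact hxs v (Finset.notMem_empty v)
  | insert j I hj ih =>
    rw [Finset.sum_insert hj, Finset.biUnion_insert]
    exact (h j (Finset.mem_insert_self j I)).add
      (ih fun i hi => h i (Finset.mem_insert_of_mem hi))

end PosDefOn

section Schur

variable {s t : Finset V} {S : Matrix V V ℝ}

/-- The Schur complement `S / S[s, s]`, extended by zero to the rows and columns in `s`. -/
noncomputable def schurCompl (S : Matrix V V ℝ) (s : Finset V) : Matrix V V ℝ :=
  S - S * blockInv S s * S

lemma restriction_mul_mul_blockInv (hA : (S.submatrix ((↑) : s → V) (↑)).PosDef) :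
    restriction s * S * blockInv S s = restriction s := by
  rw [blockInv, zeroExtend, ← Matrix.mul_assoc, ← Matrix.mul_assoc,
    ← submatrix_eq_restriction_mul, mul_nonsing_inv _ hA.det_pos.ne'.isUnit, Matrix.one_mul]

lemma blockInv_mul_mul_blockInv (hA : (S.submatrix ((↑) : s → V) (↑)).PosDef) :
    blockInv S s * S * blockInv S s = blockInv S s := by
  rw [blockInv, zeroExtend_mul_mul_zeroExtend, nonsing_inv_mul _ hA.det_pos.ne'.isUnit,
    Matrix.one_mul]

lemma blockInv_mulVec_apply_of_notMem (z : V → ℝ) {v : V} (hv : v ∉ s) :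
    (blockInv S s *ᵥ z) v = 0 := by
  rw [blockInv, zeroExtend, ← mulVec_mulVec, ← mulVec_mulVec,
    transpose_restriction_mulVec_apply, dif_neg hv]

lemma isSymm_schurCompl (hS : S.IsSymm) : (schurCompl S s).IsSymm := by
  rw [IsSymm, schurCompl, transpose_sub, transpose_mul, transpose_mul, transpose_blockInv hS,
    hS.eq, Matrix.mul_assoc]

lemma schurCompl_apply_of_mem (hA : (S.submatrix ((↑) : s → V) (↑)).PosDef) {u : V}
    (hu : u ∈ s) (v : V) : schurCompl S s u v = 0 := by
  have h : restriction s * schurCompl S s = 0 := by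
    rw [schurCompl, Matrix.mul_sub, ← Matrix.mul_assoc, ← Matrix.mul_assoc,
      restriction_mul_mul_blockInv hA, sub_self]
  simpa using congr_fun (congr_fun h ⟨u, hu⟩) v

lemma schurCompl_apply_of_forall_eq_zero {u : V} (hu : ∀ a ∈ s, S u a = 0) (v : V) :
    schurCompl S s u v = S u v := by
  have h : ∀ w, (S * blockInv S s) u w = 0 := fun w => by
    refine Finset.sum_eq_zero fun a _ => ?_
    beta_reduce
    by_cases ha : a ∈ s
    · rw [hu a ha, zero_mul]
    · rw [blockInv, zeroExtend_apply, dif_neg fun h => ha h.1, mul_zero]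
  rw [schurCompl, sub_apply, mul_apply, Finset.sum_eq_zero fun w _ => by rw [h w, zero_mul],
    sub_zero]

lemma transpose_mul_mul_eq_schurCompl (hS : S.IsSymm)
    (hA : (S.submatrix ((↑) : s → V) (↑)).PosDef) :
    (1 - blockInv S s * S)ᵀ * S * (1 - blockInv S s * S) = schurCompl S s := by
  have hG : blockInv S s * (S * (blockInv S s * S)) = blockInv S s * S := by
    rw [← Matrix.mul_assoc, ← Matrix.mul_assoc, blockInv_mul_mul_blockInv hA]
  rw [transpose_sub, transpose_one, transpose_mul, transpose_blockInv hS, hS.eq]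
  simp only [schurCompl, Matrix.sub_mul, Matrix.mul_sub, Matrix.one_mul, Matrix.mul_one,
    Matrix.mul_assoc, hG]
  abel

lemma dotProduct_schurCompl_mulVec (hS : S.IsSymm)
    (hA : (S.submatrix ((↑) : s → V) (↑)).PosDef) (x : V → ℝ) :
    x ⬝ᵥ (schurCompl S s *ᵥ x) =
      (x - blockInv S s *ᵥ (S *ᵥ x)) ⬝ᵥ (S *ᵥ (x - blockInv S s *ᵥ (S *ᵥ x))) := by
  rw [← transpose_mul_mul_eq_schurCompl hS hA, ← mulVec_mulVec, ← mulVec_mulVec,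
    dotProduct_mulVec x, vecMul_transpose, sub_mulVec, one_mulVec, mulVec_mulVec]

lemma schurCompl_sub {E : Matrix V V ℝ} (hE : E.IsSymm) (hEs : ∀ u ∈ s, ∀ v, E u v = 0) :
    schurCompl (S - E) s = schurCompl S s - E := by
  have hRE : restriction s * E = 0 := by
    ext a v
    simp [hEs a a.2 v]
  have hEG : E * blockInv S s = 0 := by
    rw [blockInv, zeroExtend, ← Matrix.mul_assoc, ← Matrix.mul_assoc, ← hE.eq,
      ← transpose_mul, hRE, transpose_zero, Matrix.zero_mul, Matrix.zero_mul]
  have hGE : blockInv S s * E = 0 := by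
    rw [blockInv, zeroExtend, Matrix.mul_assoc, hRE, Matrix.mul_zero]
  rw [schurCompl, schurCompl, blockInv, submatrix_sub_of_forall_eq_zero hEs, ← blockInv]
  simp only [Matrix.sub_mul, Matrix.mul_sub, hEG, Matrix.mul_assoc, hGE, Matrix.mul_zero, sub_zero]
  abel

lemma IsPosDefOn.isPosDefOn_schurCompl (h : IsPosDefOn S (s ∪ t)) (hst : Disjoint s t) :
    IsPosDefOn (schurCompl S s) t := by
  have hA := h.posDef_submatrix (s := s) Finset.subset_union_left
  refine ⟨isSymm_schurCompl h.isSymm, mem_of_ne_zero_of_isSymm (isSymm_schurCompl h.isSymm)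
    fun u hut v => ?_, fun x hx hxt => ?_⟩
  · by_cases hus : u ∈ s
    · exact schurCompl_apply_of_mem hA hus v
    · have hrow : ∀ w, S u w = 0 := fun w => h.apply_eq_zero fun huw => by simp_all
      rw [schurCompl_apply_of_forall_eq_zero fun a _ => hrow a, hrow]
  · have hy : ∀ v ∉ s, (x - blockInv S s *ᵥ (S *ᵥ x)) v = x v := fun v hv => by
      rw [Pi.sub_apply, blockInv_mulVec_apply_of_notMem _ hv, sub_zero]
    rw [dotProduct_schurCompl_mulVec h.isSymm hA]
    refine h.pos _ (fun h0 => hx ?_) fun v hv => ?_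
    · ext v
      by_cases hvt : v ∈ t
      · rw [← hy v (Finset.disjoint_right.mp hst hvt), h0]
      · exact hxt v hvt
    · rw [hy v fun hs => hv (Finset.mem_union_left _ hs)]
      exact hxt v fun ht => hv (Finset.mem_union_right _ ht)

lemma isPosDefOn_union_of_schurCompl (hS : S.IsSymm)
    (hsupp : ∀ u v, S u v ≠ 0 → u ∈ s ∪ t ∧ v ∈ s ∪ t)
    (hA : (S.submatrix ((↑) : s → V) (↑)).PosDef) (h : IsPosDefOn (schurCompl S s) t) :
    IsPosDefOn S (s ∪ t) := by
  refine ⟨hS, hsupp, fun x hx hxst => ?_⟩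
  by_cases hxt : ∃ v ∈ t, x v ≠ 0
  · obtain ⟨v, hvt, hxv⟩ := hxt
    have hsplit : x ⬝ᵥ (S *ᵥ x) = x ⬝ᵥ (schurCompl S s *ᵥ x) +
        (S *ᵥ x) ⬝ᵥ (blockInv S s *ᵥ (S *ᵥ x)) := by
      rw [schurCompl, sub_mulVec, dotProduct_sub, ← mulVec_mulVec, ← mulVec_mulVec,
        dotProduct_mulVec_comm_of_isSymm hS x (blockInv S s *ᵥ (S *ᵥ x)), sub_add_cancel]
    rw [hsplit]
    exact add_pos_of_pos_of_nonneg (h.dotProduct_mulVec_pos hvt hxv)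
      ((isPosDefOn_zeroExtend hA.inv).dotProduct_mulVec_nonneg _)
  · push Not at hxt
    have hxs : ∀ v ∉ s, x v = 0 := fun v hvs => by
      by_cases hvt : v ∈ t
      · exact hxt v hvt
      · exact hxst v (by simp [hvs, hvt])
    rw [dotProduct_mulVec_eq_of_supported s S hxs]
    simpa using hA.dotProduct_mulVec_pos (restriction_mulVec_ne_zero s hx hxs)

end Schur

lemma exists_isPosDefOn_split_of_disjoint {S : Matrix V V ℝ} {W B D : Finset V}
    (hWB : Disjoint W B) (hWD : Disjoint W D) (hDB : Disjoint D B)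
    (hS : IsPosDefOn S (W ∪ (D ∪ B))) (hWD0 : ∀ u ∈ W, ∀ v ∈ D, S u v = 0) :
    ∃ N, IsPosDefOn N (W ∪ B) ∧ IsPosDefOn (S - N) (D ∪ B) := by
  have hAW := hS.posDef_submatrix (s := W) Finset.subset_union_left
  have hŜ := hS.isPosDefOn_schurCompl (Finset.disjoint_union_right.mpr ⟨hWD, hWB⟩)
  have hAD := hŜ.posDef_submatrix (s := D) Finset.subset_union_left
  have hK₂ := (hŜ.isPosDefOn_schurCompl hDB).smul (c := 2⁻¹) (by norm_num)
  set Ŝ := schurCompl S W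
  set K₂ := (2⁻¹ : ℝ) • schurCompl Ŝ D
  have hKD : ∀ u ∈ D, ∀ v, K₂ u v = 0 := fun u hu v =>
    hK₂.apply_eq_zero fun h => Finset.disjoint_left.mp hDB hu h.1
  have hMW : ∀ u ∈ W, ∀ v, (Ŝ - K₂) u v = 0 := fun u hu v => by
    rw [sub_apply, show Ŝ u v = 0 from schurCompl_apply_of_mem hAW hu v,
      hK₂.apply_eq_zero fun h => Finset.disjoint_left.mp hWB hu h.1, sub_zero]
  have hM : IsPosDefOn (Ŝ - K₂) (D ∪ B) := by
    refine isPosDefOn_union_of_schurCompl ((isSymm_schurCompl hS.isSymm).sub hK₂.isSymm)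
      (fun u v huv => by_contra fun h => huv ?_) (by rwa [submatrix_sub_of_forall_eq_zero hKD]) ?_
    · rw [sub_apply, hŜ.apply_eq_zero h,
        hK₂.apply_eq_zero_of_subset Finset.subset_union_right h, sub_zero]
    · rwa [schurCompl_sub hK₂.isSymm hKD,
        show schurCompl Ŝ D - K₂ = K₂ by simp only [K₂]; module]
  have hN : (S - (Ŝ - K₂)).IsSymm := hS.isSymm.sub hM.isSymm
  refine ⟨S - (Ŝ - K₂), isPosDefOn_union_of_schurCompl hN (mem_of_ne_zero_of_isSymm hN ?_)
    (by rwa [submatrix_sub_of_forall_eq_zero hMW]) ?_, by rwa [sub_sub_cancel]⟩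
  · intro u hu v
    have hrow : ∀ a ∈ W, S u a = 0 := fun a ha => by
      by_cases huD : u ∈ D
      · rw [← hS.isSymm.apply]
        exact hWD0 a ha u huD
      · exact hS.apply_eq_zero fun h => by simp_all
    rw [sub_apply, sub_apply, show Ŝ u v = S u v from schurCompl_apply_of_forall_eq_zero hrow v,
      hK₂.apply_eq_zero fun h => hu (Finset.mem_union_right _ h.1), sub_zero, sub_self]
  · rwa [schurCompl_sub hM.isSymm hMW, sub_sub_cancel]

lemma exists_isPosDefOn_split {S : Matrix V V ℝ} {A C : Finset V} (hS : IsPosDefOn S (A ∪ C))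
    (hAC : ∀ u ∈ A \ C, ∀ v ∈ C \ A, S u v = 0) :
    ∃ N, IsPosDefOn N A ∧ IsPosDefOn (S - N) C := by
  have hunion : A \ C ∪ (C \ A ∪ A ∩ C) = A ∪ C := by
    ext v
    simp only [Finset.mem_union, Finset.mem_sdiff, Finset.mem_inter]
    tauto
  obtain ⟨N, hN, hSN⟩ := exists_isPosDefOn_split_of_disjoint (Finset.disjoint_sdiff_inter A C)
    disjoint_sdiff_sdiff (by simpa only [Finset.inter_comm] using Finset.disjoint_sdiff_inter C A)
    (hunion ▸ hS) hAC
  rw [Finset.sdiff_union_inter] at hN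
  rw [Finset.inter_comm, Finset.sdiff_union_inter] at hSN
  exact ⟨N, hN, hSN⟩

end Matrix

namespace SimpleGraph

variable {ι V : Type*} {T : SimpleGraph ι}

def IsRunningIntersection (T : SimpleGraph ι) (J : ι → Finset V) : Prop :=
  ∀ (i j : ι) (w : T.Walk i j), w.IsPath →
    ∀ v : V, v ∈ J i → v ∈ J j → ∀ k ∈ w.support, v ∈ J k

lemma IsRunningIntersection.induce {J : ι → Finset V} (hJ : T.IsRunningIntersection J)
    (s : Set ι) : (T.induce s).IsRunningIntersection fun i => J i := by
  intro i j w hw v hvi hvj k hk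
  refine hJ i j (w.map (Embedding.induce s).toHom) (hw.map Subtype.val_injective) v hvi hvj k ?_
  erw [Walk.support_map]
  exact List.mem_map_of_mem hk

lemma IsRunningIntersection.mem_of_mem_leaf {J : ι → Finset V}
    (hJ : T.IsRunningIntersection J) (hT : T.Connected) {k p j : ι}
    (hp : ∀ q, T.Adj k q ↔ q = p) (hj : j ≠ k) {v : V} (hvj : v ∈ J j) (hvk : v ∈ J k) :
    v ∈ J p := by
  obtain ⟨w, hw⟩ := hT.exists_isPath j k
  rw [← (hp _).mp (w.adj_penultimate (Walk.not_nil_of_ne hj)).symm]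
  exact hJ j k w hw v hvj hvk _ (w.getVert_mem_support _)

lemma IsTree.induce_compl_singleton (hT : T.IsTree) {k : ι} [Fintype (T.neighborSet k)]
    (hk : T.degree k = 1) : (T.induce {k}ᶜ).IsTree :=
  ⟨hT.connected.induce_compl_singleton_of_degree_eq_one hk, hT.isAcyclic.induce _⟩

variable [Fintype V] [DecidableEq V]

lemma IsRunningIntersection.exists_isPosDefOn_split_of_leaf [Fintype ι] [DecidableEq ι]
    {J : ι → Finset V}
    (hJ : T.IsRunningIntersection J) (hT : T.Connected) {k p : ι} (hp : ∀ q, T.Adj k q ↔ q = p)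
    {S : Matrix V V ℝ} (hSJ : ∀ u v, S u v ≠ 0 → ∃ j, u ∈ J j ∧ v ∈ J j)
    (hS : S.IsPosDefOn (Finset.univ.biUnion J)) :
    ∃ N : Matrix V V ℝ, N.IsPosDefOn (J k) ∧
      (S - N).IsPosDefOn (Finset.univ.biUnion fun i : ↥({k}ᶜ : Set ι) => J i) ∧
      ∀ u v, (S - N) u v ≠ 0 → ∃ i : ↥({k}ᶜ : Set ι), u ∈ J i ∧ v ∈ J i := by
  set C := Finset.univ.biUnion fun i : ↥({k}ᶜ : Set ι) => J i
  have hmemC : ∀ v, v ∈ C ↔ ∃ j ≠ k, v ∈ J j := fun v => by simp [C]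
  have hpk : p ≠ k := ((hp p).mpr rfl).ne'
  obtain ⟨N, hN, hSN⟩ := exists_isPosDefOn_split (A := J k) (C := C) (by
      convert hS using 1
      ext v
      simp only [Finset.mem_union, Finset.mem_biUnion, Finset.mem_univ, true_and, hmemC]
      exact ⟨fun h => h.elim (⟨k, ·⟩) fun ⟨j, _, hj⟩ => ⟨j, hj⟩,
        fun ⟨j, hj⟩ => if hjk : j = k then .inl (hjk ▸ hj) else .inr ⟨j, hjk, hj⟩⟩)
    fun u hu v hv => by_contra fun huv => by
      obtain ⟨j, hju, hjv⟩ := hSJ u v huv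
      by_cases hjk : j = k
      · exact (Finset.mem_sdiff.mp hv).2 (hjk ▸ hjv)
      · exact (Finset.mem_sdiff.mp hu).2 ((hmemC u).mpr ⟨j, hjk, hju⟩)
  refine ⟨N, hN, hSN, fun u v huv => ?_⟩
  obtain ⟨huC, hvC⟩ := hSN.mem_of_ne_zero u v huv
  by_cases hk : u ∈ J k ∧ v ∈ J k
  · have hmemp : ∀ w ∈ C, w ∈ J k → w ∈ J p := fun w hwC hwk => by
      obtain ⟨j, hjk, hwj⟩ := (hmemC w).mp hwC
      exact hJ.mem_of_mem_leaf hT hp hjk hwj hwk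
    exact ⟨⟨p, hpk⟩, hmemp u huC hk.1, hmemp v hvC hk.2⟩
  · have hSuv : S u v ≠ 0 := by rwa [Matrix.sub_apply, hN.apply_eq_zero hk, sub_zero] at huv
    obtain ⟨j, hju, hjv⟩ := hSJ u v hSuv
    exact ⟨⟨j, fun h => hk (h ▸ ⟨hju, hjv⟩)⟩, hju, hjv⟩

theorem IsTree.exists_sum_eq_of_isPosDefOn [Fintype ι] (hT : T.IsTree) {J : ι → Finset V}
    (hJ : T.IsRunningIntersection J) {S : Matrix V V ℝ}
    (hSJ : ∀ u v, S u v ≠ 0 → ∃ k, u ∈ J k ∧ v ∈ J k)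
    (hS : S.IsPosDefOn (Finset.univ.biUnion J)) :
    ∃ M : ι → Matrix V V ℝ, (∀ j, (M j).IsPosDefOn (J j)) ∧ ∑ j, M j = S := by
  revert T J S
  refine Fintype.induction_subsingleton_or_nontrivial (P := fun ι _ => ∀ {T : SimpleGraph ι},
    T.IsTree → ∀ {J : ι → Finset V}, T.IsRunningIntersection J → ∀ {S : Matrix V V ℝ},
    (∀ u v, S u v ≠ 0 → ∃ k, u ∈ J k ∧ v ∈ J k) →
    S.IsPosDefOn (Finset.univ.biUnion J) →
    ∃ M : ι → Matrix V V ℝ, (∀ j, (M j).IsPosDefOn (J j)) ∧ ∑ j, M j = S) ι ?_ ?_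
  · intro ι _ _ T hT J _ S _ hS
    obtain ⟨k⟩ := hT.connected.nonempty
    refine ⟨fun _ => S, fun j => ?_, Fintype.sum_subsingleton _ k⟩
    have huniv : (Finset.univ : Finset ι) = {j} := Finset.eq_singleton_iff_unique_mem.mpr
      ⟨Finset.mem_univ _, fun i _ => Subsingleton.elim i j⟩
    simpa [huniv] using hS
  · intro ι _ _ ih T hT J hJ S hSJ hS
    classical
    obtain ⟨k, hk⟩ := hT.exists_vert_degree_one_of_nontrivial
    obtain ⟨p, hkp, hp⟩ := degree_eq_one_iff_existsUnique_adj.mp hk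
    obtain ⟨N, hN, hSN, hSNJ⟩ :=
      IsRunningIntersection.exists_isPosDefOn_split_of_leaf hJ hT.connected
        (fun q => ⟨hp q, fun h => h ▸ hkp⟩) hSJ hS
    obtain ⟨M, hM, hMS⟩ := ih _ (Fintype.card_subtype_lt (x := k) (by simp))
      (hT.induce_compl_singleton hk) (hJ.induce _) hSNJ hSN
    refine ⟨fun j => if h : j = k then N else M ⟨j, h⟩, fun j => ?_, ?_⟩
    · by_cases h : j = k
      · subst h
        simpa using hN
      · simpa [h] using hM ⟨j, h⟩
    · rw [Fintype.sum_eq_add_sum_subtype_ne _ k, dif_pos rfl, ← eq_sub_iff_add_eq', ← hMS]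
      exact Fintype.sum_equiv (Equiv.subtypeEquivRight (by simp)) _ _ fun i => dif_neg i.2

end SimpleGraph

theorem pd_decomposition_general {n ℓ : ℕ} (G : SimpleGraph (Fin n)) (T : SimpleGraph (Fin ℓ))
    (J : Fin ℓ → Finset (Fin n)) (hTD : IsTreeDecomp G T J)
    (S : Matrix (Fin n) (Fin n) ℝ)
    (hSF : ∀ u v : Fin n, u ≠ v → (¬ ∃ k, u ∈ J k ∧ v ∈ J k) → S u v = 0) :
    S.PosDef ↔
      ∃ H : (j : Fin ℓ) → Matrix ↥(J j) ↥(J j) ℝ,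
        (∀ j, (H j).PosDef) ∧
        ∀ u v : Fin n,
          S u v = ∑ j : Fin ℓ,
            if h : u ∈ J j ∧ v ∈ J j then H j ⟨u, h.1⟩ ⟨v, h.2⟩ else 0 := by
  obtain ⟨hT, hcover, -, hJ⟩ := hTD
  have hunion : Finset.univ.biUnion J = Finset.univ :=
    Finset.eq_univ_of_forall fun v => by simpa using hcover v
  have hsum : ∀ H : (j : Fin ℓ) → Matrix ↥(J j) ↥(J j) ℝ, (∀ u v, S u v = ∑ j,
      if h : u ∈ J j ∧ v ∈ J j then H j ⟨u, h.1⟩ ⟨v, h.2⟩ else 0) ↔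
      ∑ j, zeroExtend (J j) (H j) = S := fun H => by
    simp only [← ext_iff, Matrix.sum_apply, zeroExtend_apply, eq_comm]
  simp_rw [hsum]
  rw [← isPosDefOn_univ_iff (S := S), ← hunion]
  have hSJ : ∀ u v, S u v ≠ 0 → ∃ k, u ∈ J k ∧ v ∈ J k := fun u v huv => by
    by_cases huv' : u = v
    · obtain ⟨k, hk⟩ := hcover u
      exact ⟨k, hk, huv' ▸ hk⟩
    · exact by_contra fun h => huv (hSF u v huv' h)
  constructor
  · intro hS
    obtain ⟨M, hM, hMS⟩ := hT.exists_sum_eq_of_isPosDefOn hJ hSJ hS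
    choose H hH hHM using fun j => isPosDefOn_iff_exists_posDef.mp (hM j)
    exact ⟨H, hH, by simp only [hHM, hMS]⟩
  · rintro ⟨H, hH, hHS⟩
    simpa [hHS] using IsPosDefOn.sum Finset.univ fun j _ => isPosDefOn_zeroExtend (hH j)

/-- Agler et al.:  a symmetric matrix `S ∈ S_F` is positive definite iff
it is the sum, over the bags, of zero-padded embeddings of positive definite matrices
`H j` indexed by `J j × J j`. -/
theorem pd_decomposition {n ℓ : ℕ} (G : SimpleGraph (Fin n)) (T : SimpleGraph (Fin ℓ))
    (J : Fin ℓ → Finset (Fin n)) (hTD : IsTreeDecomp G T J)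
    (S : Matrix (Fin n) (Fin n) ℝ) (hSsymm : S.IsSymm)
    (hSF : ∀ u v : Fin n, u ≠ v → (¬ ∃ k, u ∈ J k ∧ v ∈ J k) → S u v = 0) :
    S.PosDef ↔
      ∃ H : (j : Fin ℓ) → Matrix ↥(J j) ↥(J j) ℝ,
        (∀ j, (H j).PosDef) ∧
        ∀ u v : Fin n,
          S u v = ∑ j : Fin ℓ,
            if h : u ∈ J j ∧ v ∈ J j then H j ⟨u, h.1⟩ ⟨v, h.2⟩ else 0 :=
  pd_decomposition_general G T J hTD S hSF
end

section
/- Let 𝒯 = ({J_1,…,J_ℓ}, T) be a tree decomposition of a graph G on n vertices. Given real symmetric matrices X_1,…,X_ℓ, with X_j indexed by J_j × J_j, there exists an n×n real symmetric matrix Z satisfying Z[J_j,J_j] = X_j for all j ∈ {1,…,ℓ} if and only if for every edge (i,j) ∈ E(T) the matrices X_i and X_j agree on their common indices, i.e., X_i[u,v] = X_j[u,v] for all u, v ∈ J_i ∩ J_j. -/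
/-!
Necessity is immediate. For sufficiency, fix `u, v` and two bags containing both: by running
intersection every bag on the tree path between them contains `u` and `v`, so edge-wise
agreement propagates along the path and any two bags agree on their common entries. Then `Z`
can be read off entrywise from any bag containing the pair (and set to `0` elsewhere).
-/

open Matrix

section BagsAgree

variable {ι V α : Type*} {J : ι → Finset V} {X : (j : ι) → Matrix (J j) (J j) α}

def BagsAgree (X : (j : ι) → Matrix (J j) (J j) α) (i j : ι) : Prop :=
  ∀ (u v : V) (hui : u ∈ J i) (hvi : v ∈ J i) (huj : u ∈ J j) (hvj : v ∈ J j),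
    X i ⟨u, hui⟩ ⟨v, hvi⟩ = X j ⟨u, huj⟩ ⟨v, hvj⟩

theorem bagsAgree_of_submatrix_eq {Z : Matrix V V α}
    (hZ : ∀ j, Z.submatrix Subtype.val Subtype.val = X j) (i j : ι) : BagsAgree X i j := by
  intro u v hui hvi huj hvj
  rw [← hZ i, ← hZ j, submatrix_apply, submatrix_apply]

theorem BagsAgree.of_walk {T : SimpleGraph ι} (hedge : ∀ i j, T.Adj i j → BagsAgree X i j)
    {u v : V} {i j : ι} (w : T.Walk i j)
    (hu : ∀ k ∈ w.support, u ∈ J k) (hv : ∀ k ∈ w.support, v ∈ J k) :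
    X i ⟨u, hu i w.start_mem_support⟩ ⟨v, hv i w.start_mem_support⟩ =
      X j ⟨u, hu j w.end_mem_support⟩ ⟨v, hv j w.end_mem_support⟩ := by
  induction w with
  | nil => rfl
  | @cons a b c hab p ih =>
    have htail : ∀ k ∈ p.support, k ∈ (SimpleGraph.Walk.cons hab p).support :=
      fun k hk => List.mem_cons_of_mem a hk
    exact (hedge a b hab u v _ _ (hu b (htail b p.start_mem_support))
      (hv b (htail b p.start_mem_support))).trans
      (ih (fun k hk => hu k (htail k hk)) (fun k hk => hv k (htail k hk)))

theorem bagsAgree_of_forall_adj {T : SimpleGraph ι} (hT : T.Connected)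
    (hJ : ∀ (i j : ι) (w : T.Walk i j), w.IsPath →
      ∀ v : V, v ∈ J i → v ∈ J j → ∀ k ∈ w.support, v ∈ J k)
    (hedge : ∀ i j, T.Adj i j → BagsAgree X i j) (i j : ι) : BagsAgree X i j := by
  classical
  intro u v hui hvi huj hvj
  let p := (hT.preconnected i j).some.toPath
  exact BagsAgree.of_walk hedge p.1 (hJ i j p.1 p.2 u hui huj) (hJ i j p.1 p.2 v hvi hvj)

open Classical in
theorem exists_isSymm_submatrix_eq [Zero α] (hX : ∀ j, (X j).IsSymm)
    (hagree : ∀ i j, BagsAgree X i j) :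
    ∃ Z : Matrix V V α, Z.IsSymm ∧ ∀ j, Z.submatrix Subtype.val Subtype.val = X j := by
  refine ⟨of fun u v => if h : ∃ k, u ∈ J k ∧ v ∈ J k then
      X h.choose ⟨u, h.choose_spec.1⟩ ⟨v, h.choose_spec.2⟩ else 0, ?_, ?_⟩
  · ext u v
    simp only [transpose_apply, of_apply]
    by_cases h : ∃ k, u ∈ J k ∧ v ∈ J k
    · have h' : ∃ k, v ∈ J k ∧ u ∈ J k := h.imp fun _ => And.symm
      rw [dif_pos h', dif_pos h, hagree _ h.choose v u _ _ h.choose_spec.2 h.choose_spec.1]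
      exact (hX _).apply _ _
    · rw [dif_neg (fun h' => h (h'.imp fun _ => And.symm)), dif_neg h]
  · intro j
    ext ⟨u, hu⟩ ⟨v, hv⟩
    have h : ∃ k, u ∈ J k ∧ v ∈ J k := ⟨j, hu, hv⟩
    rw [submatrix_apply, of_apply, dif_pos h]
    exact hagree _ j u v _ _ hu hv

end BagsAgree

/-- Fukuda et al.:  given symmetric matrices `X j` indexed by `J j × J j`,
there is a symmetric matrix `Z` with `Z[J j, J j] = X j` for all `j` iff for every edge
`(i,j)` of the tree `T` the matrices `X i` and `X j` agree on their common indices. -/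
theorem agree_completion {n ℓ : ℕ} (G : SimpleGraph (Fin n)) (T : SimpleGraph (Fin ℓ))
    (J : Fin ℓ → Finset (Fin n)) (hTD : IsTreeDecomp G T J)
    (X : (j : Fin ℓ) → Matrix ↥(J j) ↥(J j) ℝ) (hXsymm : ∀ j, (X j).IsSymm) :
    (∃ Z : Matrix (Fin n) (Fin n) ℝ, Z.IsSymm ∧ ∀ j, psub Z (J j) = X j) ↔
      ∀ i j : Fin ℓ, T.Adj i j →
        ∀ (u v : Fin n) (hui : u ∈ J i) (hvi : v ∈ J i) (huj : u ∈ J j) (hvj : v ∈ J j),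
          X i ⟨u, hui⟩ ⟨v, hvi⟩ = X j ⟨u, huj⟩ ⟨v, hvj⟩ := by
  constructor
  · rintro ⟨Z, -, hZ⟩ i j -
    exact bagsAgree_of_submatrix_eq hZ i j
  · intro hedge
    exact exists_isSymm_submatrix_eq hXsymm
      (bagsAgree_of_forall_adj hTD.1.connected hTD.2.2.2 hedge)
end

section
/- Let 𝒯 = ({J_1,…,J_ℓ}, T) be a tree decomposition rooted at r. Then: (i) if X_j = Z[J_j,J_j] for all j for some n×n real symmetric matrix Z, then R_i(X) = 0 for every non-root node i; and (ii) for every family (X_1,…,X_ℓ) of real symmetric matrices, with X_j indexed by J_j × J_j, there exist an n×n real symmetric matrix Z and a family (Y_i)_{i ≠ r}, with Y_i real symmetric indexed by (J_i ∩ J_{p(i)}) × (J_i ∩ J_{p(i)}), such that for every node j: X_j = Z[J_j,J_j] + ι_j(Y_j) − Σ_{c ∈ ch(j)} ι_j(Y_c), where the term ι_j(Y_j) is absent when j = r. -/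
open Matrix

/-- `p` is the parent map of the tree `T` rooted at `r`:  the root is its own parent, every
non-root node is adjacent to its parent, the parent of a non-root node lies on the (unique)
path from the node to the root, and the edges of `T` are exactly the parent-child pairs. -/
def IsRootedAt {ℓ : ℕ} (T : SimpleGraph (Fin ℓ)) (r : Fin ℓ) (p : Fin ℓ → Fin ℓ) : Prop :=
  p r = r ∧
  (∀ j, j ≠ r → T.Adj j (p j)) ∧
  (∀ j, j ≠ r → ∀ w : T.Walk j r, w.IsPath → p j ∈ w.support) ∧
  (∀ i j, T.Adj i j ↔ ((i ≠ r ∧ p i = j) ∨ (j ≠ r ∧ p j = i)))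

/-- Entry `(u,v)` of the zero-padded embedding `ι` of the overlap-indexed symmetric matrix
`Y i` (indexed by `(J i ∩ J (p i)) × (J i ∩ J (p i))`): it agrees with `Y i` on the overlap
and vanishes elsewhere. -/
def padEntry {n ℓ : ℕ} (J : Fin ℓ → Finset (Fin n)) (p : Fin ℓ → Fin ℓ)
    (Y : (i : Fin ℓ) → Matrix ↥(J i ∩ J (p i)) ↥(J i ∩ J (p i)) ℝ)
    (i : Fin ℓ) (u v : Fin n) : ℝ :=
  if h : u ∈ J i ∩ J (p i) ∧ v ∈ J i ∩ J (p i) then Y i ⟨u, h.1⟩ ⟨v, h.2⟩ else 0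

/-!
Part (i) holds because both entries of `R_i` are `Z u v`. For part (ii) take `Z u v` to be the
average of the entries `X_k[u,v]` over the bags `k` containing `u` and `v`, and `Y_c[u,v]` the
total excess `∑ (X_k[u,v] - Z u v)` over the bags `k` of the subtree below `c` that contain `u` and
`v`. Splitting the subtree of `j` into `j` and the subtrees of its children gives
`X_j - Z = Y_j - ∑_c Y_c` on `J_j × J_j`. Truncating `Y_c` to the overlap with the parent loses
nothing, by running intersection: if `u, v ∈ J_j` are not both in `J_c` for a child `c`, no bag
below `c` contains both; and if they are not both in `J_{p(j)}`, every bag containing both lies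
below `j`, so the excess below `j` is the total excess, which is zero by the choice of `Z`.
-/

section Descendants

variable {ℓ : ℕ} {p : Fin ℓ → Fin ℓ}

open scoped Classical in
noncomputable def descendants (p : Fin ℓ → Fin ℓ) (j : Fin ℓ) : Finset (Fin ℓ) :=
  Finset.univ.filter fun k => ∃ m, p^[m] k = j

lemma mem_descendants {j k : Fin ℓ} : k ∈ descendants p j ↔ ∃ m, p^[m] k = j := by
  simp [descendants]

lemma self_mem_descendants (j : Fin ℓ) : j ∈ descendants p j :=
  mem_descendants.2 ⟨0, rfl⟩

lemma mem_descendants_of_parent_mem {j k : Fin ℓ} (h : p k ∈ descendants p j) :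
    k ∈ descendants p j := by
  obtain ⟨m, hm⟩ := mem_descendants.1 h
  exact mem_descendants.2 ⟨m + 1, by rwa [Function.iterate_succ_apply]⟩

lemma mem_descendants_parent_of_mem {c k : Fin ℓ} (h : k ∈ descendants p c) :
    k ∈ descendants p (p c) := by
  obtain ⟨m, rfl⟩ := mem_descendants.1 h
  exact mem_descendants.2 ⟨m + 1, Function.iterate_succ_apply' _ _ _⟩

lemma parent_mem_descendants_of_ne {j k : Fin ℓ} (h : k ∈ descendants p j) (hkj : k ≠ j) :
    p k ∈ descendants p j := by
  obtain ⟨_ | m, hm⟩ := mem_descendants.1 h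
  · exact absurd hm hkj
  · exact mem_descendants.2 ⟨m, by rwa [Function.iterate_succ_apply] at hm⟩

end Descendants

namespace IsRootedAt

variable {ℓ : ℕ} {T : SimpleGraph (Fin ℓ)} {r : Fin ℓ} {p : Fin ℓ → Fin ℓ}

lemma depth_parent_add_one (hroot : IsRootedAt T r p) (hT : T.Connected) {k : Fin ℓ}
    (hk : k ≠ r) : T.dist (p k) r + 1 = T.dist k r := by
  have hadj : T.Adj k (p k) := hroot.2.1 k hk
  have hle : T.dist k r ≤ 1 + T.dist (p k) r :=
    (hT.dist_triangle (v := p k)).trans_eq (by rw [SimpleGraph.dist_eq_one_iff_adj.2 hadj])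
  obtain ⟨w, hw, hlen⟩ := hT.exists_path_of_dist k r
  have hmem : p k ∈ w.support := hroot.2.2.1 k hk w hw
  have hlt : T.dist (p k) r < T.dist k r :=
    hlen ▸ (SimpleGraph.dist_le _).trans_lt (w.length_dropUntil_lt_length hmem hadj.ne.symm)
  omega

lemma depth_iterate_add (hroot : IsRootedAt T r p) (hT : T.Connected) {k : Fin ℓ} :
    ∀ {m : ℕ}, p^[m] k ≠ r → T.dist (p^[m] k) r + m = T.dist k r
  | 0, _ => rfl
  | m + 1, h => by
    rw [Function.iterate_succ_apply'] at h ⊢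
    have hm : p^[m] k ≠ r := fun hr => h (hr ▸ hroot.1)
    have := hroot.depth_parent_add_one hT h
    have := hroot.depth_parent_add_one hT hm
    have := hroot.depth_iterate_add hT hm
    omega

lemma mem_descendants_root (hroot : IsRootedAt T r p) (hT : T.Connected) (k : Fin ℓ) :
    k ∈ descendants p r := by
  refine mem_descendants.2 ⟨T.dist k r + 1, by_contra fun h => ?_⟩
  have := hroot.depth_iterate_add hT h
  omega

lemma not_mem_descendants_child (hroot : IsRootedAt T r p) (hT : T.Connected) {c : Fin ℓ}
    (hc : c ≠ r) : p c ∉ descendants p c := by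
  intro h
  obtain ⟨m, hm⟩ := mem_descendants.1 h
  have hdepth := hroot.depth_iterate_add hT (k := p c) (hm ▸ hc)
  rw [hm] at hdepth
  have := hroot.depth_parent_add_one hT hc
  omega

lemma eq_of_mem_descendants_siblings (hroot : IsRootedAt T r p) (hT : T.Connected)
    {c₁ c₂ k : Fin ℓ} (hc₁ : c₁ ≠ r) (hc₂ : c₂ ≠ r) (hp : p c₁ = p c₂)
    (h₁ : k ∈ descendants p c₁) (h₂ : k ∈ descendants p c₂) : c₁ = c₂ := by
  obtain ⟨m₁, rfl⟩ := mem_descendants.1 h₁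
  obtain ⟨m₂, rfl⟩ := mem_descendants.1 h₂
  have := hroot.depth_iterate_add hT hc₁
  have := hroot.depth_iterate_add hT hc₂
  have := hroot.depth_parent_add_one hT hc₁
  have := hroot.depth_parent_add_one hT hc₂
  rw [hp] at *
  rw [show m₁ = m₂ by omega]

lemma descendants_eq_insert_biUnion (hroot : IsRootedAt T r p) (j : Fin ℓ) :
    descendants p j = insert j
      ((Finset.univ.filter fun c => c ≠ r ∧ p c = j).biUnion (descendants p)) := by
  ext k
  simp only [Finset.mem_insert, Finset.mem_biUnion, Finset.mem_filter, Finset.mem_univ,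
    true_and]
  constructor
  · intro hk
    obtain ⟨m, hm⟩ := mem_descendants.1 hk
    induction m generalizing k with
    | zero => exact Or.inl hm
    | succ m ih =>
      rw [Function.iterate_succ_apply] at hm
      rcases ih (p k) (mem_descendants.2 ⟨m, hm⟩) hm with hpk | ⟨c, hc, hkc⟩
      · by_cases hkr : k = r
        · subst hkr
          exact Or.inl (hroot.1 ▸ hpk)
        · exact Or.inr ⟨k, ⟨hkr, hpk⟩, self_mem_descendants k⟩
      · exact Or.inr ⟨c, hc, mem_descendants_of_parent_mem hkc⟩
  · rintro (rfl | ⟨c, ⟨-, rfl⟩, hkc⟩)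
    · exact self_mem_descendants k
    · exact mem_descendants_parent_of_mem hkc

lemma sum_descendants (hroot : IsRootedAt T r p) (hT : T.Connected) {M : Type*}
    [AddCommMonoid M] (f : Fin ℓ → M) (j : Fin ℓ) :
    ∑ k ∈ descendants p j, f k =
      f j + ∑ c ∈ Finset.univ.filter (fun c => c ≠ r ∧ p c = j),
        ∑ k ∈ descendants p c, f k := by
  have hj : j ∉ (Finset.univ.filter fun c => c ≠ r ∧ p c = j).biUnion (descendants p) := by
    simp only [Finset.mem_biUnion, Finset.mem_filter, Finset.mem_univ, true_and, not_exists,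
      not_and, and_imp]
    rintro c hc rfl
    exact hroot.not_mem_descendants_child hT hc
  rw [hroot.descendants_eq_insert_biUnion, Finset.sum_insert hj, Finset.sum_biUnion]
  intro c₁ hc₁ c₂ hc₂ hne
  simp only [Finset.mem_coe, Finset.mem_filter, Finset.mem_univ, true_and] at hc₁ hc₂
  exact Finset.disjoint_left.2 fun k h₁ h₂ => hne <|
    hroot.eq_of_mem_descendants_siblings hT hc₁.1 hc₂.1 (hc₁.2.trans hc₂.2.symm) h₁ h₂

lemma mem_support_of_mem_descendants (hroot : IsRootedAt T r p) {x y k : Fin ℓ}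
    (w : T.Walk y k) (hk : k ∈ descendants p x) (hy : y ∉ descendants p x) :
    x ∈ w.support := by
  induction w with
  | nil => exact absurd hk hy
  | @cons y z k hadj w ih =>
    rw [SimpleGraph.Walk.support_cons, List.mem_cons]
    by_cases hzx : z = x
    · exact Or.inr (hzx ▸ w.start_mem_support)
    refine Or.inr (ih hk fun hz => hy ?_)
    rcases (hroot.2.2.2 y z).1 hadj with ⟨-, rfl⟩ | ⟨-, rfl⟩
    · exact mem_descendants_of_parent_mem hz
    · exact parent_mem_descendants_of_ne hz hzx

lemma mem_descendants_of_isPath (hroot : IsRootedAt T r p) {j k : Fin ℓ} (w : T.Walk j k)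
    (hw : w.IsPath) (hpj : p j ∉ w.support) : k ∈ descendants p j := by
  induction w with
  | nil => exact self_mem_descendants _
  | @cons j x k hadj w ih =>
    rw [SimpleGraph.Walk.cons_isPath_iff] at hw
    rcases (hroot.2.2.2 j x).1 hadj with ⟨-, rfl⟩ | ⟨-, rfl⟩
    · exact absurd (SimpleGraph.Walk.support_cons _ _ ▸ List.mem_cons_of_mem _
        w.start_mem_support) hpj
    · exact mem_descendants_parent_of_mem (ih hw.1 hw.2)

end IsRootedAt

section TreeDecomposition

variable {n ℓ : ℕ} {G : SimpleGraph (Fin n)} {T : SimpleGraph (Fin ℓ)}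
  {J : Fin ℓ → Finset (Fin n)} {r : Fin ℓ} {p : Fin ℓ → Fin ℓ}

lemma IsTreeDecomp.mem_parent_of_not_mem_descendants (hTD : IsTreeDecomp G T J)
    (hroot : IsRootedAt T r p) {j k : Fin ℓ} (hk : k ∉ descendants p j) {u : Fin n}
    (hu : u ∈ J k) (huj : u ∈ J j) : u ∈ J (p j) := by
  obtain ⟨w, hw, -⟩ := hTD.1.connected.exists_path_of_dist j k
  exact hTD.2.2.2 j k w hw u huj hu (p j)
    (by_contra fun h => hk (hroot.mem_descendants_of_isPath w hw h))

lemma IsTreeDecomp.mem_of_mem_descendants (hTD : IsTreeDecomp G T J)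
    (hroot : IsRootedAt T r p) {c k : Fin ℓ} (hc : c ≠ r) (hk : k ∈ descendants p c)
    {u : Fin n} (hu : u ∈ J k) (hpc : u ∈ J (p c)) : u ∈ J c := by
  obtain ⟨w, hw, -⟩ := hTD.1.connected.exists_path_of_dist (p c) k
  exact hTD.2.2.2 (p c) k w hw u hpc hu c (hroot.mem_support_of_mem_descendants w hk
    (hroot.not_mem_descendants_child hTD.1.connected hc))

end TreeDecomposition

section BagMatrices

variable {n ℓ : ℕ} {J : Fin ℓ → Finset (Fin n)}
  (X : (j : Fin ℓ) → Matrix ↥(J j) ↥(J j) ℝ)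

def padBag (k : Fin ℓ) : Matrix (Fin n) (Fin n) ℝ :=
  Matrix.of fun u v => if h : u ∈ J k ∧ v ∈ J k then X k ⟨u, h.1⟩ ⟨v, h.2⟩ else 0

def coveringBags (J : Fin ℓ → Finset (Fin n)) (u v : Fin n) : Finset (Fin ℓ) :=
  Finset.univ.filter fun k => u ∈ J k ∧ v ∈ J k

/-- Junk value `0` (from `x / 0 = 0`) where no bag contains both `u` and `v`. -/
noncomputable def bagAverage : Matrix (Fin n) (Fin n) ℝ :=
  Matrix.of fun u v => (∑ k ∈ coveringBags J u v, padBag X k u v) / (coveringBags J u v).card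

noncomputable def excess (k : Fin ℓ) : Matrix (Fin n) (Fin n) ℝ :=
  Matrix.of fun u v => if u ∈ J k ∧ v ∈ J k then padBag X k u v - bagAverage X u v else 0

noncomputable def subtreeExcess (p : Fin ℓ → Fin ℓ) (j : Fin ℓ) :
    Matrix (Fin n) (Fin n) ℝ :=
  ∑ k ∈ descendants p j, excess X k

variable {X}

lemma excess_apply_of_mem {k : Fin ℓ} {u v : Fin n} (hu : u ∈ J k) (hv : v ∈ J k) :
    excess X k u v = X k ⟨u, hu⟩ ⟨v, hv⟩ - bagAverage X u v := by
  simp [excess, padBag, hu, hv]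

lemma excess_apply_of_not_mem {k : Fin ℓ} {u v : Fin n} (h : ¬(u ∈ J k ∧ v ∈ J k)) :
    excess X k u v = 0 := by
  simp [excess, h]

variable (X) in
lemma sum_excess_eq_zero : ∑ k, excess X k = 0 := by
  ext u v
  rw [Matrix.sum_apply, Matrix.zero_apply]
  simp only [excess, Matrix.of_apply, ← Finset.sum_filter]
  change ∑ k ∈ coveringBags J u v, (padBag X k u v - bagAverage X u v) = 0
  rcases (coveringBags J u v).eq_empty_or_nonempty with h | h
  · rw [h, Finset.sum_empty]
  · rw [Finset.sum_sub_distrib, Finset.sum_const, nsmul_eq_mul, bagAverage, Matrix.of_apply,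
      mul_div_cancel₀ _ (Nat.cast_ne_zero.2 h.card_pos.ne'), sub_self]

lemma padBag_isSymm (hX : ∀ j, (X j).IsSymm) (k : Fin ℓ) : (padBag X k).IsSymm := by
  refine Matrix.IsSymm.ext fun u v => ?_
  by_cases h : u ∈ J k ∧ v ∈ J k
  · simp [padBag, h, (hX k).apply ⟨u, h.1⟩ ⟨v, h.2⟩]
  · rw [padBag, Matrix.of_apply, Matrix.of_apply, dif_neg h, dif_neg fun h' => h h'.symm]

lemma bagAverage_isSymm (hX : ∀ j, (X j).IsSymm) : (bagAverage X).IsSymm := by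
  refine Matrix.IsSymm.ext fun u v => ?_
  have hcov : coveringBags J v u = coveringBags J u v := by
    simp only [coveringBags, and_comm]
  simp only [bagAverage, Matrix.of_apply, hcov, (padBag_isSymm hX _).apply]

lemma excess_isSymm (hX : ∀ j, (X j).IsSymm) (k : Fin ℓ) : (excess X k).IsSymm := by
  refine Matrix.IsSymm.ext fun u v => ?_
  simp only [excess, Matrix.of_apply, (padBag_isSymm hX k).apply, (bagAverage_isSymm hX).apply,
    and_comm]

lemma subtreeExcess_isSymm (hX : ∀ j, (X j).IsSymm) (p : Fin ℓ → Fin ℓ) (j : Fin ℓ) :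
    (subtreeExcess X p j).IsSymm := by
  simp only [Matrix.IsSymm, subtreeExcess, Matrix.transpose_sum, (excess_isSymm hX _).eq]

end BagMatrices

section Decomposition

variable {n ℓ : ℕ} {G : SimpleGraph (Fin n)} {T : SimpleGraph (Fin ℓ)}
  {J : Fin ℓ → Finset (Fin n)} {r : Fin ℓ} {p : Fin ℓ → Fin ℓ}
  {X : (j : Fin ℓ) → Matrix ↥(J j) ↥(J j) ℝ}

lemma IsRootedAt.subtreeExcess_root_eq_zero (hroot : IsRootedAt T r p) (hT : T.Connected) :
    subtreeExcess X p r = 0 := by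
  rw [subtreeExcess, Finset.eq_univ_of_forall (hroot.mem_descendants_root hT),
    sum_excess_eq_zero]

lemma IsRootedAt.subtreeExcess_eq_excess_add_sum_children (hroot : IsRootedAt T r p)
    (hT : T.Connected) (j : Fin ℓ) :
    subtreeExcess X p j =
      excess X j +
        ∑ c ∈ Finset.univ.filter (fun c => c ≠ r ∧ p c = j), subtreeExcess X p c :=
  hroot.sum_descendants hT _ j

lemma IsTreeDecomp.subtreeExcess_apply_eq_zero_of_not_mem_parent (hTD : IsTreeDecomp G T J)
    (hroot : IsRootedAt T r p) {j : Fin ℓ} {u v : Fin n} (hu : u ∈ J j) (hv : v ∈ J j)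
    (h : ¬(u ∈ J (p j) ∧ v ∈ J (p j))) : subtreeExcess X p j u v = 0 := by
  rw [subtreeExcess, Matrix.sum_apply, Finset.sum_subset (Finset.subset_univ _),
    ← Matrix.sum_apply, sum_excess_eq_zero, Matrix.zero_apply]
  exact fun k _ hk => excess_apply_of_not_mem fun hk' => h
    ⟨hTD.mem_parent_of_not_mem_descendants hroot hk hk'.1 hu,
      hTD.mem_parent_of_not_mem_descendants hroot hk hk'.2 hv⟩

lemma IsTreeDecomp.subtreeExcess_apply_eq_zero_of_not_mem (hTD : IsTreeDecomp G T J)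
    (hroot : IsRootedAt T r p) {c : Fin ℓ} (hc : c ≠ r) {u v : Fin n} (hu : u ∈ J (p c))
    (hv : v ∈ J (p c)) (h : ¬(u ∈ J c ∧ v ∈ J c)) : subtreeExcess X p c u v = 0 := by
  rw [subtreeExcess, Matrix.sum_apply]
  exact Finset.sum_eq_zero fun k hk => excess_apply_of_not_mem fun hk' => h
    ⟨hTD.mem_of_mem_descendants hroot hc hk hk'.1 hu,
      hTD.mem_of_mem_descendants hroot hc hk hk'.2 hv⟩

lemma padEntry_psub {M : Fin ℓ → Matrix (Fin n) (Fin n) ℝ} {i : Fin ℓ} {u v : Fin n}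
    (h : ¬(u ∈ J i ∩ J (p i) ∧ v ∈ J i ∩ J (p i)) → M i u v = 0) :
    padEntry J p (fun i => psub (M i) (J i ∩ J (p i))) i u v = M i u v := by
  unfold padEntry
  split_ifs with h'
  · rfl
  · exact (h h').symm

end Decomposition

/-- kernel and orthogonal complement of the overlap-difference map:
(i) if `X j = Z[J j, J j]` for a symmetric `Z`, then all overlap differences `R i (X)`
vanish; and (ii) every symmetric family `(X j)` decomposes as
`X j = Z[J j, J j] + ι_j (Y j) − Σ_{c ∈ ch(j)} ι_j (Y c)` for some symmetric `Z` and
symmetric overlap-indexed family `(Y i)_{i ≠ r}` (the term `ι_j (Y j)` being absent at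
the root `j = r`). -/
theorem overlap_kernel_and_decomposition {n ℓ : ℕ}
    (G : SimpleGraph (Fin n)) (T : SimpleGraph (Fin ℓ))
    (J : Fin ℓ → Finset (Fin n)) (hTD : IsTreeDecomp G T J)
    (r : Fin ℓ) (p : Fin ℓ → Fin ℓ) (hroot : IsRootedAt T r p) :
    ((∀ Z : Matrix (Fin n) (Fin n) ℝ, Z.IsSymm →
        ∀ i : Fin ℓ, i ≠ r →
          ∀ (u v : Fin n) (hu : u ∈ J i ∩ J (p i)) (hv : v ∈ J i ∩ J (p i)),
            psub Z (J i) ⟨u, (Finset.mem_inter.mp hu).1⟩ ⟨v, (Finset.mem_inter.mp hv).1⟩ -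
              psub Z (J (p i)) ⟨u, (Finset.mem_inter.mp hu).2⟩
                ⟨v, (Finset.mem_inter.mp hv).2⟩ = 0) ∧
      (∀ X : (j : Fin ℓ) → Matrix ↥(J j) ↥(J j) ℝ, (∀ j, (X j).IsSymm) →
        ∃ (Z : Matrix (Fin n) (Fin n) ℝ)
          (Y : (i : Fin ℓ) → Matrix ↥(J i ∩ J (p i)) ↥(J i ∩ J (p i)) ℝ),
          Z.IsSymm ∧ (∀ i, i ≠ r → (Y i).IsSymm) ∧
          ∀ (j : Fin ℓ) (u v : Fin n) (hu : u ∈ J j) (hv : v ∈ J j),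
            X j ⟨u, hu⟩ ⟨v, hv⟩ =
              Z u v + (if j = r then 0 else padEntry J p Y j u v) -
                ∑ c ∈ Finset.univ.filter (fun c => c ≠ r ∧ p c = j),
                  padEntry J p Y c u v)) := by
  refine ⟨fun Z _ i _ u v _ _ => sub_self _, fun X hX => ?_⟩
  have hT : T.Connected := hTD.1.connected
  let Y : (i : Fin ℓ) → Matrix ↥(J i ∩ J (p i)) ↥(J i ∩ J (p i)) ℝ :=
    fun i => psub (subtreeExcess X p i) (J i ∩ J (p i))
  refine ⟨bagAverage X, Y, bagAverage_isSymm hX,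
    fun i _ => (subtreeExcess_isSymm hX p i).submatrix _,
    fun j u v hu hv => ?_⟩
  have hown : (if j = r then 0 else padEntry J p Y j u v) = subtreeExcess X p j u v := by
    split_ifs with hj
    · rw [hj, hroot.subtreeExcess_root_eq_zero hT, Matrix.zero_apply]
    · exact padEntry_psub fun h => hTD.subtreeExcess_apply_eq_zero_of_not_mem_parent hroot hu hv
        fun h' => h ⟨Finset.mem_inter.2 ⟨hu, h'.1⟩, Finset.mem_inter.2 ⟨hv, h'.2⟩⟩
  have hchildren : ∀ c ∈ Finset.univ.filter (fun c => c ≠ r ∧ p c = j),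
      padEntry J p Y c u v = subtreeExcess X p c u v := by
    intro c hc
    obtain ⟨hcr, rfl⟩ := (Finset.mem_filter.1 hc).2
    exact padEntry_psub fun h => hTD.subtreeExcess_apply_eq_zero_of_not_mem hroot hcr hu hv
      fun h' => h ⟨Finset.mem_inter.2 ⟨h'.1, hu⟩, Finset.mem_inter.2 ⟨h'.2, hv⟩⟩
  have hsplit := congr_fun₂ (hroot.subtreeExcess_eq_excess_add_sum_children (X := X) hT j) u v
  rw [Matrix.add_apply, Matrix.sum_apply, excess_apply_of_mem hu hv] at hsplit
  rw [hown, Finset.sum_congr rfl hchildren]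
  linarith
end

section
/- Let 𝒯 = ({J_1,…,J_ℓ}, T) be a tree decomposition rooted at r, let A_1,…,A_m be n×n real symmetric matrices with splittings (A_{i,j})_{j=1}^ℓ on 𝒯, and let b ∈ ℝ^m. Then the following are equivalent: (a) there exists a family (X_1,…,X_ℓ), with each X_j real symmetric positive definite indexed by J_j × J_j, such that X_i[u,v] = X_{p(i)}[u,v] for every non-root node i and all u, v ∈ J_i ∩ J_{p(i)}, and Σ_{j=1}^ℓ A_{i,j} • X_j = b_i for every i ∈ {1,…,m}; (b) there exists an n×n real symmetric positive definite matrix X with A_i • X = b_i for every i ∈ {1,…,m}. -/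
/-!
Restricting a positive definite matrix to the bags gives a consistent family, so only the
completion direction has content. Bags are added one at a time, each after its parent; by the
running intersection property a new bag meets the vertices already covered only inside its
parent's bag, where the partial matrices agree. Two positive definite matrices `Y₁, Y₂` that
agree on the overlap `S = S₁ ∩ S₂` of two index sets glue: with `π` the `Y₂`-orthogonal
projection onto the coordinates in `S` and `P` the coordinate projection onto `S₂ \ S₁`, put
`C = (1 - π) P`. Then `Z = (1 - C)ᴴ Y₁ (1 - C) + Cᴴ Y₂ C` is positive definite, since
`(1 - C) x` and `C x` cannot both vanish, and `C` kills the coordinates in `S₁`, while on `S₂`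
it acts as `1 - π`, so `Z` agrees with `Yₖ` on `Sₖ × Sₖ` (Pythagoras for `π`). The splitting
identities then transport the linear constraints between the bags and the completed matrix.
-/

open Matrix

/-- `(Ms j)_j` is a splitting of the symmetric matrix `M` on the tree decomposition with
bags `J`:  `Σ_j Ms j • X[J j, J j] = M • X` for every symmetric `X`, where `M • N = tr(Mᵀ N)`. -/
def IsSplitting {n ℓ : ℕ} (J : Fin ℓ → Finset (Fin n)) (M : Matrix (Fin n) (Fin n) ℝ)
    (Ms : (j : Fin ℓ) → Matrix ↥(J j) ↥(J j) ℝ) : Prop :=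
  ∀ X : Matrix (Fin n) (Fin n) ℝ, X.IsSymm →
    ∑ j : Fin ℓ, Matrix.trace ((Ms j)ᵀ * psub X (J j)) = Matrix.trace (Mᵀ * X)

open scoped ComplexOrder

namespace Matrix

variable {ι 𝕜 : Type*} [Fintype ι] [RCLike 𝕜]

theorem posDef_conjTranspose_mul_mul_add {m m' : Type*} [Fintype m] [Fintype m']
    {Y₁ : Matrix m m 𝕜} {Y₂ : Matrix m' m' 𝕜} (hY₁ : Y₁.PosDef) (hY₂ : Y₂.PosDef)
    {A : Matrix m ι 𝕜} {B : Matrix m' ι 𝕜} (hAB : ∀ x, A *ᵥ x = 0 → B *ᵥ x = 0 → x = 0) :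
    (Aᴴ * Y₁ * A + Bᴴ * Y₂ * B).PosDef := by
  refine .of_dotProduct_mulVec_pos ((isHermitian_conjTranspose_mul_mul A hY₁.1).add
    (isHermitian_conjTranspose_mul_mul B hY₂.1)) fun x hx => ?_
  have hquad : star x ⬝ᵥ ((Aᴴ * Y₁ * A + Bᴴ * Y₂ * B) *ᵥ x) =
      star (A *ᵥ x) ⬝ᵥ (Y₁ *ᵥ (A *ᵥ x)) + star (B *ᵥ x) ⬝ᵥ (Y₂ *ᵥ (B *ᵥ x)) := by
    simp only [add_mulVec, dotProduct_add, star_mulVec, dotProduct_mulVec, vecMul_vecMul,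
      ← mulVec_mulVec]
  rw [hquad]
  by_cases hA : A *ᵥ x = 0
  · rw [hA, mulVec_zero, dotProduct_zero, zero_add]
    exact hY₂.dotProduct_mulVec_pos fun hB => hx (hAB x hA hB)
  · exact add_pos_of_pos_of_nonneg (hY₁.dotProduct_mulVec_pos hA)
      (hY₂.posSemidef.dotProduct_mulVec_nonneg _)

theorem IsHermitian.sandwich_conjTranspose_mul_mul {P : Matrix ι ι 𝕜} (hP : P.IsHermitian)
    (L Y : Matrix ι ι 𝕜) :
    P * (Lᴴ * Y * L) * P = (L * P)ᴴ * Y * (L * P) := by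
  rw [conjTranspose_mul, hP.eq]; simp only [mul_assoc]

variable [DecidableEq ι]

theorem IsHermitian.eq_conj_add_conj_one_sub {Y P π : Matrix ι ι 𝕜} (hY : Y.IsHermitian)
    (hP : P.IsHermitian) (hPπ : P * π = π) (hYπ : P * Y * π = P * Y) :
    Y = πᴴ * Y * π + (1 - π)ᴴ * Y * (1 - π) := by
  have hcross : πᴴ * Y * (1 - π) = 0 := by
    calc πᴴ * Y * (1 - π) = πᴴ * (P * Y - P * Y * π) := by
          nth_rw 1 [← hPπ]; rw [conjTranspose_mul, hP.eq]; simp only [mul_sub, mul_one, mul_assoc]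
      _ = 0 := by rw [hYπ, sub_self, mul_zero]
  calc Y = (π + (1 - π))ᴴ * Y * (π + (1 - π)) := by simp
    _ = πᴴ * Y * π + (1 - π)ᴴ * Y * (1 - π) + (πᴴ * Y * (1 - π) + (πᴴ * Y * (1 - π))ᴴ) := by
      simp only [conjTranspose_add, conjTranspose_mul, conjTranspose_conjTranspose, hY.eq,
        add_mul, mul_add, mul_assoc]
      abel
    _ = πᴴ * Y * π + (1 - π)ᴴ * Y * (1 - π) := by
      rw [hcross, conjTranspose_zero, add_zero, add_zero]

theorem PosDef.exists_orthogonal_projection {Y : Matrix ι ι 𝕜} (hY : Y.PosDef)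
    {P : Matrix ι ι 𝕜} (hP : IsStarProjection P) :
    ∃ π : Matrix ι ι 𝕜, P * π = π ∧ π * P = P ∧ P * Y * π = P * Y := by
  have hPP : P * P = P := hP.isIdempotentElem.eq
  have hPH : Pᴴ = P := hP.isSelfAdjoint.star_eq
  -- `π = N⁻¹ P Y`, where `N = P Y P + (1 - P)` is positive definite and commutes with `P`.
  have hN : (P * Y * P + (1 - P)).PosDef := by
    have h1P : (1 - P)ᴴ * 1 * (1 - P) = 1 - P := by
      rw [conjTranspose_sub, conjTranspose_one, hPH, mul_one, hP.one_sub.isIdempotentElem.eq]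
    have := posDef_conjTranspose_mul_mul_add hY PosDef.one (A := P) (B := 1 - P)
      fun x hPx h1Px => by rwa [sub_mulVec, one_mulVec, hPx, sub_zero] at h1Px
    rwa [h1P, hPH] at this
  obtain ⟨u, hu⟩ := hN.isUnit
  have hPN : P * u = P * Y * P := by
    rw [hu, mul_add, ← mul_assoc, ← mul_assoc, hPP, hP.mul_one_sub_self, add_zero]
  have hNP : u * P = P * Y * P := by
    rw [hu, add_mul, mul_assoc _ P P, hPP, hP.one_sub_mul_self, add_zero]
  set K : Matrix ι ι 𝕜 := ↑u⁻¹
  have hcomm : P * K = K * P := Commute.units_inv_right (hPN.trans hNP.symm)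
  refine ⟨K * P * Y, ?_, ?_, ?_⟩
  · rw [← mul_assoc, ← mul_assoc, hcomm, mul_assoc K P P, hPP]
  · calc K * P * Y * P = K * (P * Y * P) := by simp only [mul_assoc]
      _ = P := by rw [← hNP, ← mul_assoc, Units.inv_mul, one_mul]
  · calc P * Y * (K * P * Y) = P * Y * P * K * Y := by rw [← hcomm]; simp only [mul_assoc]
      _ = P * (↑u * K) * Y := by rw [← hPN]; simp only [mul_assoc]
      _ = P * Y := by rw [Units.mul_inv, mul_one]

theorem PosDef.exists_glue {P₁ P₂ : Matrix ι ι 𝕜} (hP₁ : IsStarProjection P₁)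
    (hP₂ : IsStarProjection P₂) (hcomm : Commute P₁ P₂) {Y₁ Y₂ : Matrix ι ι 𝕜}
    (hY₁ : Y₁.PosDef) (hY₂ : Y₂.PosDef)
    (hagree : P₁ * P₂ * Y₁ * (P₁ * P₂) = P₁ * P₂ * Y₂ * (P₁ * P₂)) :
    ∃ Z : Matrix ι ι 𝕜, Z.PosDef ∧ P₁ * Z * P₁ = P₁ * Y₁ * P₁ ∧ P₂ * Z * P₂ = P₂ * Y₂ * P₂ := by
  set P := P₁ * P₂
  have hP : IsStarProjection P := hP₁.mul hP₂ hcomm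
  have hH₁ : P₁.IsHermitian := hP₁.isSelfAdjoint
  have hH₂ : P₂.IsHermitian := hP₂.isSelfAdjoint
  have hH : P.IsHermitian := hP.isSelfAdjoint
  obtain ⟨π, hPπ, hπP, hYπ⟩ := hY₂.exists_orthogonal_projection hP
  have hP₁' : (P₂ - P) * P₁ = 0 := by
    rw [sub_mul, mul_assoc, ← hcomm.eq, ← mul_assoc, hP₁.isIdempotentElem.eq, sub_self]
  have hP₂' : (P₂ - P) * P₂ = P₂ - P := by
    rw [sub_mul, hP₂.isIdempotentElem.eq, mul_assoc, hP₂.isIdempotentElem.eq]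
  have hπP' : (1 - π) * P = 0 := by rw [sub_mul, one_mul, hπP, sub_self]
  set C := (1 - π) * (P₂ - P)
  have hCP₁ : C * P₁ = 0 := by rw [mul_assoc, hP₁', mul_zero]
  have hCP₂ : C * P₂ = (1 - π) * P₂ := by rw [mul_assoc, hP₂', mul_sub, hπP', sub_zero]
  refine ⟨(1 - C)ᴴ * Y₁ * (1 - C) + Cᴴ * Y₂ * C, posDef_conjTranspose_mul_mul_add hY₁ hY₂
    fun x h1 h2 => by rwa [sub_mulVec, one_mulVec, h2, sub_zero] at h1, ?_, ?_⟩
  · rw [mul_add, add_mul, hH₁.sandwich_conjTranspose_mul_mul, hH₁.sandwich_conjTranspose_mul_mul,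
      sub_mul, one_mul, hCP₁, sub_zero, conjTranspose_zero, zero_mul, zero_mul, add_zero, hH₁.eq]
  · have h1CP₂ : (1 - C) * P₂ = π * P₂ := by
      rw [sub_mul, one_mul, hCP₂, sub_mul, one_mul, sub_sub_cancel]
    have hPπP₂ : ∀ Y, (π * P₂)ᴴ * Y * (π * P₂) = (π * P₂)ᴴ * (P * Y * P) * (π * P₂) := by
      intro Y
      conv_lhs => rw [← hPπ]
      simp only [conjTranspose_mul, hH.eq, mul_assoc]
    have hY₁Y₂ : (π * P₂)ᴴ * Y₁ * (π * P₂) = (π * P₂)ᴴ * Y₂ * (π * P₂) := by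
      rw [hPπP₂, hagree, ← hPπP₂]
    rw [mul_add, add_mul, hH₂.sandwich_conjTranspose_mul_mul, hH₂.sandwich_conjTranspose_mul_mul,
      h1CP₂, hCP₂, hY₁Y₂, ← hH₂.sandwich_conjTranspose_mul_mul,
      ← hH₂.sandwich_conjTranspose_mul_mul,
      ← add_mul, ← mul_add, ← hY₂.1.eq_conj_add_conj_one_sub hH hPπ hYπ]

def coordProj (s : Finset ι) : Matrix ι ι 𝕜 := diagonal fun i => if i ∈ s then 1 else 0

theorem coordProj_mul_coordProj (s t : Finset ι) :
    (coordProj s * coordProj t : Matrix ι ι 𝕜) = coordProj (s ∩ t) := by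
  simp only [coordProj, diagonal_mul_diagonal, Finset.mem_inter, ite_zero_mul_ite_zero, one_mul]

theorem commute_coordProj (s t : Finset ι) :
    Commute (coordProj s : Matrix ι ι 𝕜) (coordProj t) := by
  rw [Commute, SemiconjBy, coordProj_mul_coordProj, coordProj_mul_coordProj, Finset.inter_comm]

theorem coordProj_mul_mul_coordProj_apply (s t : Finset ι) (M : Matrix ι ι 𝕜) (a c : ι) :
    (coordProj s * M * coordProj t : Matrix ι ι 𝕜) a c = if a ∈ s ∧ c ∈ t then M a c else 0 := by
  simp only [coordProj, diagonal_mul, mul_diagonal, ite_mul, mul_ite, one_mul, mul_one,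
    zero_mul, mul_zero, ite_and]
  split_ifs <;> rfl

theorem coordProj_mul_mul_coordProj_eq_iff (s : Finset ι) (M M' : Matrix ι ι 𝕜) :
    coordProj s * M * coordProj s = coordProj s * M' * coordProj s ↔
      ∀ a ∈ s, ∀ c ∈ s, M a c = M' a c := by
  simp only [← ext_iff, coordProj_mul_mul_coordProj_apply]
  refine ⟨fun h a ha c hc => by simpa [ha, hc] using h a c, fun h a c => ?_⟩
  split_ifs with hac
  exacts [h a hac.1 c hac.2, rfl]

theorem isStarProjection_coordProj (s : Finset ι) :
    IsStarProjection (coordProj s : Matrix ι ι 𝕜) where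
  isIdempotentElem := by rw [IsIdempotentElem, coordProj_mul_coordProj, Finset.inter_self]
  isSelfAdjoint := by simp [IsSelfAdjoint, coordProj, star_eq_conjTranspose]

theorem one_sub_coordProj_mulVec_apply (s : Finset ι) (x : ι → 𝕜) (a : ι) :
    ((1 - coordProj s) *ᵥ x) a = if a ∈ s then 0 else x a := by
  simp only [coordProj, sub_mulVec, one_mulVec, Pi.sub_apply, mulVec_diagonal, ite_mul, one_mul,
    zero_mul]
  split_ifs <;> simp

theorem PosDef.exists_posDef_submatrix_eq {s : Finset ι} {B : Matrix s s 𝕜} (hB : B.PosDef) :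
    ∃ Y : Matrix ι ι 𝕜, Y.PosDef ∧ Y.submatrix (↑) (↑) = B := by
  set V : Matrix s ι 𝕜 := (1 : Matrix ι ι 𝕜).submatrix (↑) id
  set Q : Matrix ι ι 𝕜 := 1 - coordProj s
  refine ⟨Vᴴ * B * V + Qᴴ * 1 * Q, posDef_conjTranspose_mul_mul_add hB PosDef.one
    fun x hV hQ => funext fun a => ?_, ?_⟩
  · by_cases ha : a ∈ s
    · simpa [V, mulVec, dotProduct, one_apply] using congrFun hV ⟨a, ha⟩
    · simpa [Q, one_sub_coordProj_mulVec_apply, ha] using congrFun hQ a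
  · ext a c
    simp [V, Q, coordProj, mul_apply, one_apply, diagonal_apply]

end Matrix

section TreeDecomposition

variable {n ℓ : ℕ} {T : SimpleGraph (Fin ℓ)} {r : Fin ℓ} {p : Fin ℓ → Fin ℓ}

def IsParentClosed (r : Fin ℓ) (p : Fin ℓ → Fin ℓ) (F : Finset (Fin ℓ)) : Prop :=
  ∀ i ∈ F, i ≠ r → p i ∈ F

theorem IsParentClosed.insert {F : Finset (Fin ℓ)} (hF : IsParentClosed r p F) {j : Fin ℓ}
    (hj : p j ∈ F) : IsParentClosed r p (insert j F) := by
  intro i hi hir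
  rcases Finset.mem_insert.1 hi with rfl | hi
  exacts [Finset.mem_insert_of_mem hj, Finset.mem_insert_of_mem (hF i hi hir)]

theorem IsRootedAt.parent_mem_support (hroot : IsRootedAt T r p) {F : Finset (Fin ℓ)}
    (hF : IsParentClosed r p F) {j k : Fin ℓ} (w : T.Walk j k) (hw : w.IsPath) (hj : j ∉ F)
    (hk : k ∈ F) : p j ∈ w.support := by
  induction w with
  | nil => exact absurd hk hj
  | @cons j u k hadj w ih =>
    rcases (hroot.2.2.2 j u).1 hadj with ⟨-, rfl⟩ | ⟨hur, rfl⟩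
    · exact List.mem_cons_of_mem _ w.start_mem_support
    · have hu : u ∉ F := fun hu => hj (hF u hu hur)
      exact absurd (ih hw.of_cons hu hk) ((SimpleGraph.Walk.cons_isPath_iff hadj w).1 hw).2

theorem IsRootedAt.exists_parent_mem (hT : T.Connected) (hroot : IsRootedAt T r p)
    {F : Finset (Fin ℓ)} (hF : IsParentClosed r p F) {k : Fin ℓ} (hk : k ∈ F) (hne : F ≠ .univ) :
    ∃ j ∉ F, p j ∈ F := by
  -- A walk from outside `F` to `k` enters `F` along a tree edge; the outer end is the child.
  obtain ⟨j₀, hj₀⟩ : ∃ j₀, j₀ ∉ F := by simpa [Finset.eq_univ_iff_forall] using hne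
  obtain ⟨d, -, hd, hdF⟩ := (hT.preconnected j₀ k).some.exists_boundary_dart (↑F)ᶜ hj₀
    (by simpa using hk)
  simp only [Set.mem_compl_iff, Finset.mem_coe, not_not] at hd hdF
  rcases (hroot.2.2.2 _ _).1 d.adj with ⟨-, hp⟩ | ⟨hr, hp⟩
  · exact ⟨d.fst, hd, hp ▸ hdF⟩
  · exact absurd (hp ▸ hF _ hdF hr) hd

theorem IsRootedAt.induction_univ (hT : T.Connected) (hroot : IsRootedAt T r p)
    {Q : Finset (Fin ℓ) → Prop}
    (step : ∀ F, IsParentClosed r p F → ∀ j ∉ F, p j ∈ F → Q F → Q (insert j F))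
    {F : Finset (Fin ℓ)} (hF : IsParentClosed r p F) {k : Fin ℓ} (hk : k ∈ F) (hQ : Q F) :
    Q .univ := by
  by_cases hne : F = .univ
  · exact hne ▸ hQ
  obtain ⟨j, hj, hpj⟩ := hroot.exists_parent_mem hT hF hk hne
  exact hroot.induction_univ hT step (hF.insert hpj) (Finset.mem_insert_of_mem hk)
    (step F hF j hj hpj hQ)
termination_by (Finset.univ \ F).card
decreasing_by
  rw [Finset.sdiff_insert]
  exact Finset.card_erase_lt_of_mem (by simpa using hj)

theorem IsTreeDecomp.mem_parent_of_mem {G : SimpleGraph (Fin n)} {J : Fin ℓ → Finset (Fin n)}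
    (hTD : IsTreeDecomp G T J) (hroot : IsRootedAt T r p) {F : Finset (Fin ℓ)}
    (hF : IsParentClosed r p F) {j k : Fin ℓ} (hj : j ∉ F) (hk : k ∈ F) {v : Fin n}
    (hvj : v ∈ J j) (hvk : v ∈ J k) : v ∈ J (p j) := by
  obtain ⟨w⟩ := hTD.1.connected.preconnected j k
  exact hTD.2.2.2 j k w.bypass w.bypass_isPath v hvj hvk (p j)
    (hroot.parent_mem_support hF w.bypass w.bypass_isPath hj hk)

end TreeDecomposition

section Completion

variable {n ℓ : ℕ} {G : SimpleGraph (Fin n)} {T : SimpleGraph (Fin ℓ)}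
  {J : Fin ℓ → Finset (Fin n)} {r : Fin ℓ} {p : Fin ℓ → Fin ℓ}
  (hTD : IsTreeDecomp G T J) (hroot : IsRootedAt T r p)
  {X : (j : Fin ℓ) → Matrix (J j) (J j) ℝ} (hX : ∀ j, (X j).PosDef)
  (hcons : ∀ i : Fin ℓ, i ≠ r → ∀ (a c : Fin n) (hai : a ∈ J i) (hci : c ∈ J i)
    (hap : a ∈ J (p i)) (hcp : c ∈ J (p i)), X i ⟨a, hai⟩ ⟨c, hci⟩ = X (p i) ⟨a, hap⟩ ⟨c, hcp⟩)
include hTD hroot hX hcons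

theorem exists_posDef_psub_eq_insert {F : Finset (Fin ℓ)} (hF : IsParentClosed r p F)
    {j : Fin ℓ} (hj : j ∉ F) (hpj : p j ∈ F) {Z : Matrix (Fin n) (Fin n) ℝ} (hZ : Z.PosDef)
    (hZX : ∀ k ∈ F, psub Z (J k) = X k) :
    ∃ Z' : Matrix (Fin n) (Fin n) ℝ, Z'.PosDef ∧ ∀ k ∈ insert j F, psub Z' (J k) = X k := by
  have hjr : j ≠ r := by rintro rfl; exact hj (hroot.1 ▸ hpj)
  have hsep : ∀ v ∈ F.biUnion J ∩ J j, v ∈ J (p j) := fun v hv => by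
    obtain ⟨hvF, hvj⟩ := Finset.mem_inter.1 hv
    obtain ⟨k, hk, hvk⟩ := Finset.mem_biUnion.1 hvF
    exact hTD.mem_parent_of_mem hroot hF hj hk hvj hvk
  obtain ⟨Y, hY, hYX⟩ := (hX j).exists_posDef_submatrix_eq
  have hagree : ∀ a ∈ F.biUnion J ∩ J j, ∀ c ∈ F.biUnion J ∩ J j, Z a c = Y a c := by
    intro a ha c hc
    calc Z a c = X (p j) ⟨a, hsep a ha⟩ ⟨c, hsep c hc⟩ := by rw [← hZX (p j) hpj]; rfl
      _ = X j ⟨a, (Finset.mem_inter.1 ha).2⟩ ⟨c, (Finset.mem_inter.1 hc).2⟩ :=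
        (hcons j hjr a c _ _ _ _).symm
      _ = Y a c := by rw [← hYX]; rfl
  obtain ⟨Z', hZ', hZ'Z, hZ'Y⟩ := hZ.exists_glue (isStarProjection_coordProj (F.biUnion J))
    (isStarProjection_coordProj (J j)) (commute_coordProj _ _) hY
    (by rwa [coordProj_mul_coordProj, coordProj_mul_mul_coordProj_eq_iff])
  rw [coordProj_mul_mul_coordProj_eq_iff] at hZ'Z hZ'Y
  refine ⟨Z', hZ', fun k hk => ?_⟩
  rcases Finset.mem_insert.1 hk with rfl | hk
  · rw [← hYX]; ext a c; exact hZ'Y a a.2 c c.2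
  · rw [← hZX k hk]; ext a c
    exact hZ'Z a (Finset.mem_biUnion.2 ⟨k, hk, a.2⟩) c (Finset.mem_biUnion.2 ⟨k, hk, c.2⟩)

theorem exists_posDef_psub_eq :
    ∃ Z : Matrix (Fin n) (Fin n) ℝ, Z.PosDef ∧ ∀ j, psub Z (J j) = X j := by
  obtain ⟨Y, hY, hYX⟩ := (hX r).exists_posDef_submatrix_eq
  simpa using hroot.induction_univ (Q := fun F => ∃ Z : Matrix (Fin n) (Fin n) ℝ, Z.PosDef ∧
      ∀ j ∈ F, psub Z (J j) = X j) hTD.1.connected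
    (fun F hF j hj hpj ⟨Z, hZ, hZX⟩ =>
      exists_posDef_psub_eq_insert hTD hroot hX hcons hF hj hpj hZ hZX)
    (F := {r}) (fun i hi hir => absurd (Finset.mem_singleton.1 hi) hir)
    (Finset.mem_singleton_self r) ⟨Y, hY, fun k hk => Finset.mem_singleton.1 hk ▸ hYX⟩

end Completion

theorem primal_slater_transfer_general {n ℓ m : ℕ}
    (G : SimpleGraph (Fin n)) (T : SimpleGraph (Fin ℓ))
    (J : Fin ℓ → Finset (Fin n)) (hTD : IsTreeDecomp G T J)
    (r : Fin ℓ) (p : Fin ℓ → Fin ℓ) (hroot : IsRootedAt T r p)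
    (A : Fin m → Matrix (Fin n) (Fin n) ℝ)
    (As : (i : Fin m) → (j : Fin ℓ) → Matrix ↥(J j) ↥(J j) ℝ)
    (hsplit : ∀ i, IsSplitting J (A i) (As i))
    (b : Fin m → ℝ) :
    (∃ X : (j : Fin ℓ) → Matrix ↥(J j) ↥(J j) ℝ,
        (∀ j, (X j).PosDef) ∧
        (∀ i : Fin ℓ, i ≠ r →
          ∀ (a c : Fin n) (hai : a ∈ J i) (hci : c ∈ J i)
            (hap : a ∈ J (p i)) (hcp : c ∈ J (p i)),
            X i ⟨a, hai⟩ ⟨c, hci⟩ = X (p i) ⟨a, hap⟩ ⟨c, hcp⟩) ∧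
        (∀ i : Fin m, ∑ j : Fin ℓ, Matrix.trace ((As i j)ᵀ * X j) = b i)) ↔
      (∃ X : Matrix (Fin n) (Fin n) ℝ, X.PosDef ∧
        ∀ i : Fin m, Matrix.trace ((A i)ᵀ * X) = b i) := by
  constructor
  · rintro ⟨X, hX, hcons, hb⟩
    obtain ⟨Z, hZ, hZX⟩ := exists_posDef_psub_eq hTD hroot hX hcons
    refine ⟨Z, hZ, fun i => ?_⟩
    rw [← hsplit i Z (isHermitian_iff_isSymm.1 hZ.1), ← hb i]
    simp only [hZX]
  · rintro ⟨X, hX, hb⟩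
    exact ⟨fun j => psub X (J j), fun j => hX.submatrix Subtype.val_injective,
      fun _ _ _ _ _ _ _ _ => rfl,
      fun i => (hsplit i X (isHermitian_iff_isSymm.1 hX.1)).trans (hb i)⟩

/-- primal Slater condition transfers:  there is a family of positive
definite matrices `X j` agreeing on the overlaps along tree edges and satisfying the split
constraints `Σ_j As i j • X j = b i`, iff there is a positive definite `X` with
`A i • X = b i` for all `i`. -/
theorem primal_slater_transfer {n ℓ m : ℕ}
    (G : SimpleGraph (Fin n)) (T : SimpleGraph (Fin ℓ))
    (J : Fin ℓ → Finset (Fin n)) (hTD : IsTreeDecomp G T J)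
    (r : Fin ℓ) (p : Fin ℓ → Fin ℓ) (hroot : IsRootedAt T r p)
    (A : Fin m → Matrix (Fin n) (Fin n) ℝ) (hAsymm : ∀ i, (A i).IsSymm)
    (hsparse : ∀ (i : Fin m) (a c : Fin n), A i a c ≠ 0 → a = c ∨ G.Adj a c)
    (As : (i : Fin m) → (j : Fin ℓ) → Matrix ↥(J j) ↥(J j) ℝ)
    (hAssymm : ∀ i j, (As i j).IsSymm)
    (hsplit : ∀ i, IsSplitting J (A i) (As i))
    (b : Fin m → ℝ) :
    (∃ X : (j : Fin ℓ) → Matrix ↥(J j) ↥(J j) ℝ,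
        (∀ j, (X j).PosDef) ∧
        (∀ i : Fin ℓ, i ≠ r →
          ∀ (a c : Fin n) (hai : a ∈ J i) (hci : c ∈ J i)
            (hap : a ∈ J (p i)) (hcp : c ∈ J (p i)),
            X i ⟨a, hai⟩ ⟨c, hci⟩ = X (p i) ⟨a, hap⟩ ⟨c, hcp⟩) ∧
        (∀ i : Fin m, ∑ j : Fin ℓ, Matrix.trace ((As i j)ᵀ * X j) = b i)) ↔
      (∃ X : Matrix (Fin n) (Fin n) ℝ, X.PosDef ∧
        ∀ i : Fin m, Matrix.trace ((A i)ᵀ * X) = b i) :=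
  primal_slater_transfer_general G T J hTD r p hroot A As hsplit b
end

section
/- Let d = d_1 + ⋯ + d_n with each d_k ≥ 1, and partition {1,…,d} into consecutive intervals I_1,…,I_n of sizes d_1,…,d_n, in increasing order. Let T be a tree on {1,…,n} such that every node j < n has a parent p(j) with p(j) > j (i.e., the identity ordering is topological, with root n). Let H be a d×d real symmetric positive definite matrix such that H[I_i,I_j] = 0 (the zero block) whenever i ≠ j and (i,j) ∉ E(T). Then there exists a d×d lower-triangular matrix L with strictly positive diagonal entries such that L·Lᵀ = H and, for all i > j, if the block L[I_i,I_j] is nonzero then the block H[I_i,I_j] is nonzero (in particular (i,j) ∈ E(T)); i.e., the Cholesky factorization incurs no block fill. -/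
open Matrix Finset

/-! Since the identity ordering is topological, every block `c` has at most one later block `b`
with `H[I_b, I_c] ≠ 0`, namely its parent. Induct on the column `j` of the Cholesky factor:
in `H k j = ∑_{m < j} L k m * L j m + L k j * L j j` with `β j < β k`, a nonzero term would make
both `β k` and `β j` (if distinct from `β m`) later neighbours of `β m`, so each term vanishes,
and `L k j = 0` as soon as the block `H[I_{β k}, I_{β j}]` does. -/

namespace Matrix

section Cholesky

variable {ι : Type*} [Fintype ι] [LinearOrder ι]

theorem IsLowerTriangular.exists_pos_diag_mul_transpose_eq {L : Matrix ι ι ℝ}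
    (hL : L.IsLowerTriangular) (hdiag : ∀ i, L i i ≠ 0) :
    ∃ L' : Matrix ι ι ℝ, L'.IsLowerTriangular ∧ (∀ i, 0 < L' i i) ∧ L' * L'ᵀ = L * Lᵀ := by
  let s : ι → ℝ := fun i => if 0 < L i i then 1 else -1
  have hss : diagonal s * (diagonal s)ᵀ = 1 := by
    rw [diagonal_transpose, diagonal_mul_diagonal, ← diagonal_one]
    exact congrArg diagonal (funext fun i => by simp only [s]; split_ifs <;> norm_num)
  refine ⟨L * diagonal s, hL.mul (blockTriangular_diagonal _), fun i => ?_, ?_⟩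
  · rw [mul_diagonal]
    simp only [s]
    split_ifs with h
    · simpa using h
    · simpa using lt_of_le_of_ne (not_lt.1 h) (hdiag i)
  · rw [transpose_mul, ← Matrix.mul_assoc, Matrix.mul_assoc L, hss, Matrix.mul_one]

variable [WellFoundedLT ι] [LocallyFiniteOrderBot ι] {H : Matrix ι ι ℝ}

theorem LDL.lower_isLowerTriangular (hH : H.PosDef) : (LDL.lower hH).IsLowerTriangular :=
  blockTriangular_inv_of_blockTriangular fun _ _ hij => LDL.lowerInv_triangular hH hij

theorem LDL.diagEntries_nonneg (hH : H.PosDef) (i : ι) : 0 ≤ LDL.diagEntries hH i := by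
  simpa [LDL.diagEntries, EuclideanSpace.inner_toLp_toLp, dotProduct_comm] using
    hH.posSemidef.dotProduct_mulVec_nonneg (LDL.lowerInv hH i)

theorem PosDef.exists_isLowerTriangular_mul_transpose_eq (hH : H.PosDef) :
    ∃ L : Matrix ι ι ℝ, L.IsLowerTriangular ∧ L * Lᵀ = H := by
  let S : Matrix ι ι ℝ := diagonal fun i => √(LDL.diagEntries hH i)
  have hSS : S * Sᵀ = LDL.diag hH := by
    rw [diagonal_transpose, diagonal_mul_diagonal, LDL.diag]
    exact congrArg diagonal (funext fun i => Real.mul_self_sqrt (LDL.diagEntries_nonneg hH i))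
  refine ⟨LDL.lower hH * S, (LDL.lower_isLowerTriangular hH).mul (blockTriangular_diagonal _), ?_⟩
  rw [transpose_mul, ← Matrix.mul_assoc, Matrix.mul_assoc _ S, hSS,
    ← conjTranspose_eq_transpose_of_trivial]
  exact LDL.lower_conj_diag hH

theorem PosDef.exists_cholesky (hH : H.PosDef) :
    ∃ L : Matrix ι ι ℝ, L.IsLowerTriangular ∧ (∀ i, 0 < L i i) ∧ L * Lᵀ = H := by
  obtain ⟨L, hL, rfl⟩ := hH.exists_isLowerTriangular_mul_transpose_eq
  have hdet : L.det * L.det ≠ 0 := by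
    simpa only [det_mul, det_transpose] using hH.det_pos.ne'
  rw [det_of_isLowerTriangular L hL] at hdet
  exact hL.exists_pos_diag_mul_transpose_eq fun i =>
    prod_ne_zero_iff.1 (left_ne_zero_of_mul hdet) i (mem_univ i)

end Cholesky

def BlockNeZero {ι κ R : Type*} [Zero R] (β : ι → κ) (M : Matrix ι ι R) (b c : κ) : Prop :=
  ∃ x y, β x = b ∧ β y = c ∧ M x y ≠ 0

section NoFill

variable {ι κ R : Type*} [Fintype ι] [LinearOrder ι] [LocallyFiniteOrderBot ι] [Semiring R]
  {L : Matrix ι ι R}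

theorem IsLowerTriangular.mul_transpose_apply (hL : L.IsLowerTriangular) (k j : ι) :
    (L * Lᵀ) k j = ∑ m ∈ Iio j, L k m * L j m + L k j * L j j := by
  rw [mul_apply, ← sum_subset (subset_univ (Iic j)), ← Iio_insert, sum_insert notMem_Iio_self,
    add_comm]
  · rfl
  · intro m _ hm
    rw [transpose_apply, @hL j m (by simpa using hm), mul_zero]

theorem IsLowerTriangular.blockNeZero_mul_transpose_of_ne_zero [WellFoundedLT ι] [PartialOrder κ]
    [NoZeroDivisors R] (hL : L.IsLowerTriangular) (hdiag : ∀ i, L i i ≠ 0)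
    {β : ι → κ} (hβ : Monotone β)
    (hforest : ∀ c b b', c < b → c < b' →
      BlockNeZero β (L * Lᵀ) b c → BlockNeZero β (L * Lᵀ) b' c → b = b')
    {k j : ι} (hkj : β j < β k) (hLkj : L k j ≠ 0) : BlockNeZero β (L * Lᵀ) (β k) (β j) := by
  induction j using WellFoundedLT.induction generalizing k with | _ j ih =>
  by_contra hzero
  have hterms : ∀ m ∈ Iio j, L k m * L j m = 0 := by
    intro m hm
    by_contra hne
    obtain ⟨hkm, hjm⟩ := mul_ne_zero_iff.1 hne
    have hmj := mem_Iio.1 hm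
    have hβmj : β m ≤ β j := hβ hmj.le
    have hblock_km := ih m hmj (hβmj.trans_lt hkj) hkm
    rcases hβmj.lt_or_eq with hlt | heq
    · exact hkj.ne' (hforest _ _ _ (hβmj.trans_lt hkj) hlt hblock_km (ih m hmj hlt hjm))
    · exact hzero (heq ▸ hblock_km)
  have hentry : (L * Lᵀ) k j = 0 := by_contra fun h => hzero ⟨k, j, rfl, rfl, h⟩
  rw [hL.mul_transpose_apply, sum_eq_zero hterms, zero_add] at hentry
  exact hLkj ((mul_eq_zero.1 hentry).resolve_right (hdiag j))

end NoFill

end Matrix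

theorem block_cholesky_no_fill_general {d n : ℕ}
    (β : Fin d → Fin n) (hmono : Monotone β)
    (T : SimpleGraph (Fin n))
    (p : Fin n → Fin n)
    (hplt : ∀ j : Fin n, (j : ℕ) + 1 < n → j < p j)
    (hadj : ∀ i j : Fin n, T.Adj i j ↔
      (((i : ℕ) + 1 < n ∧ p i = j) ∨ ((j : ℕ) + 1 < n ∧ p j = i)))
    (H : Matrix (Fin d) (Fin d) ℝ) (hH : H.PosDef)
    (hHsparse : ∀ k k' : Fin d, β k ≠ β k' → ¬ T.Adj (β k) (β k') → H k k' = 0) :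
    ∃ L : Matrix (Fin d) (Fin d) ℝ,
      (∀ k k' : Fin d, k < k' → L k k' = 0) ∧
      (∀ k : Fin d, 0 < L k k) ∧
      L * Lᵀ = H ∧
      ∀ i j : Fin n, j < i →
        (∃ a b : Fin d, β a = i ∧ β b = j ∧ L a b ≠ 0) →
        ((∃ a b : Fin d, β a = i ∧ β b = j ∧ H a b ≠ 0) ∧ T.Adj i j) := by
  obtain ⟨L, hlow, hdiag, rfl⟩ := hH.exists_cholesky
  have hedge : ∀ b c, c < b → BlockNeZero β (L * Lᵀ) b c → T.Adj b c := by
    rintro b c hcb ⟨x, y, rfl, rfl, hxy⟩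
    by_contra hna
    exact hxy (hHsparse x y hcb.ne' hna)
  have hparent : ∀ b c, c < b → T.Adj b c → p c = b := by
    intro b c hcb hbc
    rcases (hadj b c).1 hbc with ⟨hb, rfl⟩ | ⟨_, hpc⟩
    · exact absurd (hplt b hb) hcb.not_gt
    · exact hpc
  refine ⟨L, fun k k' => @hlow k k', hdiag, rfl, ?_⟩
  rintro i j hji ⟨a, b, rfl, rfl, hab⟩
  have hblock := hlow.blockNeZero_mul_transpose_of_ne_zero (fun k => (hdiag k).ne') hmono
    (fun c b b' hb hb' h h' =>
      (hparent _ _ hb (hedge _ _ hb h)).symm.trans (hparent _ _ hb' (hedge _ _ hb' h'))) hji hab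
  exact ⟨hblock, hedge _ _ hji hblock⟩

/-- block Cholesky factorization with no block fill.
The index set `{1,…,d}` is partitioned into consecutive intervals `I j = β⁻¹(j)` (encoded by
a monotone surjective block-assignment map `β : Fin d → Fin n`); `T` is a tree on the blocks
whose edges are exactly the parent-child pairs of the parent map `p`, and every non-root
block `j` (i.e. `j + 1 < n`, the root being the last block) satisfies `j < p j`, so the
identity ordering is topological.  If `H` is positive definite with vanishing off-diagonal
blocks away from the edges of `T`, then `H = L Lᵀ` for a lower-triangular `L` with strictly
positive diagonal whose strictly-lower blocks are nonzero only where the corresponding block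
of `H` is nonzero (in particular only on edges of `T`). -/
theorem block_cholesky_no_fill {d n : ℕ}
    (β : Fin d → Fin n) (hmono : Monotone β) (hsurj : Function.Surjective β)
    (T : SimpleGraph (Fin n)) (hT : T.IsTree)
    (p : Fin n → Fin n)
    (hproot : ∀ j : Fin n, ¬ ((j : ℕ) + 1 < n) → p j = j)
    (hplt : ∀ j : Fin n, (j : ℕ) + 1 < n → j < p j)
    (hadj : ∀ i j : Fin n, T.Adj i j ↔
      (((i : ℕ) + 1 < n ∧ p i = j) ∨ ((j : ℕ) + 1 < n ∧ p j = i)))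
    (H : Matrix (Fin d) (Fin d) ℝ) (hH : H.PosDef)
    (hHsparse : ∀ k k' : Fin d, β k ≠ β k' → ¬ T.Adj (β k) (β k') → H k k' = 0) :
    ∃ L : Matrix (Fin d) (Fin d) ℝ,
      (∀ k k' : Fin d, k < k' → L k k' = 0) ∧
      (∀ k : Fin d, 0 < L k k) ∧
      L * Lᵀ = H ∧
      ∀ i j : Fin n, j < i →
        (∃ a b : Fin d, β a = i ∧ β b = j ∧ L a b ≠ 0) →
        ((∃ a b : Fin d, β a = i ∧ β b = j ∧ H a b ≠ 0) ∧ T.Adj i j) :=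
  block_cholesky_no_fill_general β hmono T p hplt hadj H hH hHsparse
end

section
/- Let 𝒯 = ({J_1,…,J_ℓ}, T) be a tree decomposition of a graph G on n vertices, and let ω = max_j |J_j|. Suppose X_1,…,X_ℓ are real symmetric positive semidefinite matrices, with X_j indexed by J_j × J_j, such that for every edge (i,j) ∈ E(T): X_i[u,v] = X_j[u,v] for all u, v ∈ J_i ∩ J_j. Then there exists a real n×ω matrix U such that the positive semidefinite matrix X = U·Uᵀ satisfies X[J_j,J_j] = X_j for every j ∈ {1,…,ℓ}; in particular there is a positive semidefinite completion of rank at most ω. -/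
open Matrix

/-!
A positive semidefinite matrix of size at most `ω` is the Gram matrix of vectors in `ℝ^ω`, and
two families with the same Gram matrix differ by a linear isometry of `ℝ^ω`. Remove a leaf `j`
of the tree, with neighbour `i`, and realise the remaining bags by vectors inductively. By the
running-intersection property `J j` meets the other bags only inside `J i`, where the vectors
already have Gram matrix `X i = X j`; so a Gram realisation of `X j`, moved by an isometry to
agree with them on `J i ∩ J j`, glues with them. The rows of `U` are the resulting vectors.
-/

open scoped InnerProductSpace ComplexOrder

section GramMatrix

variable {𝕜 ι E : Type*} [RCLike 𝕜] [Fintype ι] [NormedAddCommGroup E] [InnerProductSpace 𝕜 E]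
  [FiniteDimensional 𝕜 E]

theorem exists_linearIsometry_apply_eq_of_gram_eq {v w : ι → E} (h : gram 𝕜 v = gram 𝕜 w) :
    ∃ Φ : E →ₗᵢ[𝕜] E, ∀ a, Φ (v a) = w a := by
  classical
  let Lv := Fintype.linearCombination 𝕜 v
  let Lw := Fintype.linearCombination 𝕜 w
  have hinner : ∀ c d, ⟪Lw c, Lw d⟫_𝕜 = ⟪Lv c, Lv d⟫_𝕜 := fun c d => by
    simp only [Lv, Lw, Fintype.linearCombination_apply, ← star_dotProduct_gram_mulVec, h]
  -- Equal Gram matrices make `Lv c ↦ Lw c` a well-defined isometry on the span of `v`.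
  have hker : LinearMap.ker Lv ≤ LinearMap.ker Lw := fun c hc => by
    rw [LinearMap.mem_ker] at hc ⊢
    rw [← inner_self_eq_zero (𝕜 := 𝕜), hinner, hc, inner_zero_left]
  let ψ : LinearMap.range Lv →ₗ[𝕜] E :=
    (LinearMap.ker Lv).liftQ Lw hker ∘ₗ (LinearMap.quotKerEquivRange Lv).symm.toLinearMap
  have hψ : ∀ c, ψ ⟨Lv c, LinearMap.mem_range_self Lv c⟩ = Lw c := fun c => by
    have : (LinearMap.quotKerEquivRange Lv).symm ⟨Lv c, LinearMap.mem_range_self Lv c⟩ =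
        Submodule.Quotient.mk c := by
      rw [LinearEquiv.symm_apply_eq]
      exact Subtype.ext (LinearMap.quotKerEquivRange_apply_mk Lv c).symm
    simp [ψ, this]
  have hψ_inner : ∀ x y, ⟪ψ x, ψ y⟫_𝕜 = ⟪x, y⟫_𝕜 := by
    rintro ⟨-, c, rfl⟩ ⟨-, d, rfl⟩
    rw [hψ, hψ, hinner]
    rfl
  refine ⟨(ψ.isometryOfInner hψ_inner).extend, fun a => ?_⟩
  have := LinearIsometry.extend_apply (ψ.isometryOfInner hψ_inner)
    ⟨_, LinearMap.mem_range_self Lv (Pi.single a 1)⟩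
  rw [LinearMap.coe_isometryOfInner, hψ] at this
  simpa [Lv, Lw] using this

theorem exists_gram_eq_of_posSemidef {A : Matrix ι ι 𝕜} (hA : A.PosSemidef)
    (hdim : Fintype.card ι ≤ Module.finrank 𝕜 E) : ∃ v : ι → E, gram 𝕜 v = A := by
  classical
  obtain ⟨B, rfl⟩ : ∃ B : Matrix ι ι 𝕜, A = Bᴴ * B := by
    open scoped MatrixOrder in
    exact CStarAlgebra.nonneg_iff_eq_star_mul_self.mp hA.nonneg
  let e : ι → E := stdOrthonormalBasis 𝕜 E ∘ Fin.castLE hdim ∘ Fintype.equivFin ι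
  have he : Orthonormal 𝕜 e := (stdOrthonormalBasis 𝕜 E).orthonormal.comp _
    ((Fin.castLE_injective hdim).comp (Fintype.equivFin ι).injective)
  refine ⟨fun a => ∑ c, B c a • e c, Matrix.ext fun a b => ?_⟩
  simp [he.inner_sum, mul_apply]

theorem exists_gram_eq_extend_of_posSemidef {A : Matrix ι ι 𝕜} (hA : A.PosSemidef)
    (hdim : Fintype.card ι ≤ Module.finrank 𝕜 E) (g : ι → E) (s : Set ι)
    (hg : ∀ a ∈ s, ∀ b ∈ s, ⟪g a, g b⟫_𝕜 = A a b) :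
    ∃ f : ι → E, gram 𝕜 f = A ∧ ∀ a ∈ s, f a = g a := by
  classical
  obtain ⟨w, rfl⟩ := exists_gram_eq_of_posSemidef hA hdim
  obtain ⟨Φ, hΦ⟩ := exists_linearIsometry_apply_eq_of_gram_eq
    (v := fun a : s => w a) (w := fun a : s => g a) (Matrix.ext fun a b => (hg a a.2 b b.2).symm)
  exact ⟨Φ ∘ w, Matrix.ext fun a b => Φ.inner_map_map _ _, fun a ha => hΦ ⟨a, ha⟩⟩

end GramMatrix

theorem gram_eq_mul_transpose {ι κ : Type*} [Fintype κ] (f : ι → EuclideanSpace ℝ κ) :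
    gram ℝ f = (of fun a c => f a c) * (of fun a c => f a c)ᵀ := by
  ext a b
  simp [mul_apply, PiLp.inner_apply, mul_comm]

namespace SimpleGraph

variable {α β : Type*} {T : SimpleGraph β} {J : β → Finset α}

def RunningIntersection (T : SimpleGraph β) (J : β → Finset α) : Prop :=
  ∀ (i j : β) (w : T.Walk i j), w.IsPath → ∀ v, v ∈ J i → v ∈ J j → ∀ k ∈ w.support, v ∈ J k

theorem RunningIntersection.induce (hJ : T.RunningIntersection J) (s : Set β) :
    (T.induce s).RunningIntersection fun k => J k := by
  intro i j w hw v hvi hvj k hk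
  have hk' : (k : β) ∈ (w.map (Embedding.induce s).toHom).support := by
    rw [Walk.support_map]
    exact List.mem_map_of_mem hk
  exact hJ i j _ ((Walk.isPath_map_iff_of_injective Subtype.val_injective).mpr hw) v hvi hvj k hk'

theorem RunningIntersection.mem_of_mem_of_mem_leaf (hT : T.Connected)
    (hJ : T.RunningIntersection J) {i j k : β} (hleaf : ∀ x, T.Adj j x → x = i) (hkj : k ≠ j)
    {v : α} (hvk : v ∈ J k) (hvj : v ∈ J j) : v ∈ J i := by
  obtain ⟨P, hP⟩ := hT.exists_isPath k j
  have hpen : P.penultimate = i := hleaf _ (P.adj_penultimate (Walk.not_nil_of_ne hkj)).symm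
  exact hJ k j P hP v hvk hvj i (hpen ▸ P.getVert_mem_support _)

theorem IsTree.induce_compl_singleton_of_degree_eq_one (hT : T.IsTree) {j : β}
    [Fintype (T.neighborSet j)] (hj : T.degree j = 1) : (T.induce {j}ᶜ).IsTree :=
  ⟨hT.connected.induce_compl_singleton_of_degree_eq_one hj, hT.isAcyclic.induce _⟩

end SimpleGraph

section TreeDecomposition

variable {𝕜 α E : Type*} [RCLike 𝕜] [NormedAddCommGroup E] [InnerProductSpace 𝕜 E]
  [FiniteDimensional 𝕜 E]

theorem exists_gram_eq_on_finset_extend {B : Finset α} {A : Matrix B B 𝕜} (hA : A.PosSemidef)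
    (hdim : B.card ≤ Module.finrank 𝕜 E) (f₀ : α → E) (s : Set α)
    (hs : ∀ a b : B, (a : α) ∈ s → (b : α) ∈ s → ⟪f₀ a, f₀ b⟫_𝕜 = A a b) :
    ∃ f : α → E, gram 𝕜 (fun a : B => f a) = A ∧ ∀ v, (v ∈ B → v ∈ s) → f v = f₀ v := by
  classical
  obtain ⟨g, hgA, hg⟩ := exists_gram_eq_extend_of_posSemidef hA (by simpa using hdim)
    (fun a => f₀ a) {a | (a : α) ∈ s} fun a ha b hb => hs a b ha hb
  refine ⟨fun v => if hv : v ∈ B then g ⟨v, hv⟩ else f₀ v, by simpa using hgA, fun v hv => ?_⟩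
  by_cases hvB : v ∈ B
  · simpa [hvB] using hg ⟨v, hvB⟩ (hv hvB)
  · simp [hvB]

theorem exists_gram_eq_of_runningIntersection {β : Type*} [Finite β] {T : SimpleGraph β}
    (hT : T.IsTree) {J : β → Finset α} (hJ : T.RunningIntersection J)
    (X : ∀ j, Matrix (J j) (J j) 𝕜) (hX : ∀ j, (X j).PosSemidef)
    (hdim : ∀ j, (J j).card ≤ Module.finrank 𝕜 E)
    (hagree : ∀ i j, T.Adj i j → ∀ (u v : α) (hui : u ∈ J i) (hvi : v ∈ J i)
      (huj : u ∈ J j) (hvj : v ∈ J j), X i ⟨u, hui⟩ ⟨v, hvi⟩ = X j ⟨u, huj⟩ ⟨v, hvj⟩) :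
    ∃ f : α → E, ∀ j, gram 𝕜 (fun a : J j => f a) = X j := by
  classical
  induction β using Finite.induction_subsingleton_or_nontrivial with
  | hbase β =>
    cases isEmpty_or_nonempty β with
    | inl _ => exact ⟨0, isEmptyElim⟩
    | inr hne =>
      obtain ⟨j⟩ := hne
      obtain ⟨f, hf, -⟩ := exists_gram_eq_on_finset_extend (hX j) (hdim j) 0 ∅ (by simp)
      exact ⟨f, fun k => Subsingleton.elim j k ▸ hf⟩
  | hstep β ih =>
    have := Fintype.ofFinite β
    obtain ⟨j, hj⟩ := hT.exists_vert_degree_one_of_nontrivial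
    obtain ⟨i, hji, hleaf⟩ := SimpleGraph.degree_eq_one_iff_existsUnique_adj.mp hj
    obtain ⟨f₀, hf₀⟩ := ih ({j}ᶜ : Set β) (Finite.card_subtype_lt (x := j) (by simp))
      (hT.induce_compl_singleton_of_degree_eq_one hj) (hJ.induce _) (fun k => X k)
      (fun k => hX k) (fun k => hdim k) fun k k' hkk' => hagree k k' hkk'
    obtain ⟨f, hfj, hf⟩ := exists_gram_eq_on_finset_extend (hX j) (hdim j) f₀ (J i)
      fun a b ha hb => by
        calc ⟪f₀ a, f₀ b⟫_𝕜 = X i ⟨a, ha⟩ ⟨b, hb⟩ := congr_fun₂ (hf₀ ⟨i, hji.ne'⟩) ⟨a, ha⟩ ⟨b, hb⟩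
          _ = X j a b := hagree i j hji.symm a b ha hb a.2 b.2
    refine ⟨f, fun k => ?_⟩
    rcases eq_or_ne k j with rfl | hkj
    · exact hfj
    · have hfk : (fun a : J k => f a) = fun a : J k => f₀ a := funext fun a =>
        hf a fun haj => hJ.mem_of_mem_of_mem_leaf hT.connected hleaf hkj a.2 haj
      rw [hfk]
      exact hf₀ ⟨k, hkj⟩

end TreeDecomposition

/-- low-rank positive semidefinite completion:  if the positive
semidefinite matrices `X j`, indexed by `J j × J j`, agree on their common indices along
every edge of the tree `T`, then with `ω = max_j |J j|` there is an `n × ω` matrix `U`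
such that the positive semidefinite matrix `X = U Uᵀ` satisfies `X[J j, J j] = X j` for
every `j`; in particular there is a positive semidefinite completion of rank at most `ω`. -/
theorem low_rank_completion {n ℓ : ℕ}
    (G : SimpleGraph (Fin n)) (T : SimpleGraph (Fin ℓ))
    (J : Fin ℓ → Finset (Fin n)) (hTD : IsTreeDecomp G T J)
    (X : (j : Fin ℓ) → Matrix ↥(J j) ↥(J j) ℝ) (hXpsd : ∀ j, (X j).PosSemidef)
    (hagree : ∀ i j : Fin ℓ, T.Adj i j →
      ∀ (u v : Fin n) (hui : u ∈ J i) (hvi : v ∈ J i) (huj : u ∈ J j) (hvj : v ∈ J j),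
        X i ⟨u, hui⟩ ⟨v, hvi⟩ = X j ⟨u, huj⟩ ⟨v, hvj⟩) :
    ∃ U : Matrix (Fin n) (Fin (Finset.univ.sup fun j : Fin ℓ => (J j).card)) ℝ,
      (U * Uᵀ).PosSemidef ∧ ∀ j : Fin ℓ, psub (U * Uᵀ) (J j) = X j := by
  obtain ⟨hT, -, -, hJ⟩ := hTD
  obtain ⟨f, hf⟩ := exists_gram_eq_of_runningIntersection
    (E := EuclideanSpace ℝ (Fin (Finset.univ.sup fun j : Fin ℓ => (J j).card))) hT hJ X hXpsd
    (fun j => by simpa using Finset.le_sup (f := fun j => (J j).card) (Finset.mem_univ j)) hagree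
  refine ⟨of fun v c => f v c, ?_, fun j => ?_⟩
  · rw [← gram_eq_mul_transpose]
    exact posSemidef_gram ℝ f
  · rw [← gram_eq_mul_transpose]
    exact hf j
end
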